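/- arXiv:math/0007085 — 7 statements merged into one kernel-verified Lean document; each statement's English description precedes it below -/
import Mathlib

section
/- The sum of the tangent cones is contained in the relative tangent cone: C₀(X) + C₀(Y) ⊆ C₀(X,Y), provided there exist holomorphic curves through 0 in X and in Y realizing each tangent direction. Precisely: if Φ, Ψ : K(r) → ℂⁿ are non-constant holomorphic maps with Φ(0) = Ψ(0) = 0, Φ(K(r)) ⊆ X, Ψ(K(r)) ⊆ Y, and Φ(t)/t^{ord Φ} → −v, Ψ(t)/t^{ord Ψ} → w as t → 0, then v + w ∈ C₀(X,Y). -/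
open Filter Topology

/-- The relative tangent cone `C₀(X,Y)` of two subsets of `ℂⁿ` at the origin:
vectors `v` for which there are sequences `xᵥ ∈ X`, `yᵥ ∈ Y`, `λᵥ ∈ ℂ` with
`xᵥ → 0`, `yᵥ → 0` and `λᵥ • (yᵥ - xᵥ) → v`. -/
def relTangentCone {n : ℕ} (X Y : Set (Fin n → ℂ)) : Set (Fin n → ℂ) :=
  {v | ∃ x y : ℕ → (Fin n → ℂ), ∃ lam : ℕ → ℂ,
    (∀ ν, x ν ∈ X) ∧ (∀ ν, y ν ∈ Y) ∧
    Tendsto x atTop (𝓝 0) ∧ Tendsto y atTop (𝓝 0) ∧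
    Tendsto (fun ν => lam ν • (y ν - x ν)) atTop (𝓝 v)}

/-- The ordinary tangent cone `C₀(X)` at the origin. -/
def tangentCone0 {n : ℕ} (X : Set (Fin n → ℂ)) : Set (Fin n → ℂ) :=
  {v | ∃ x : ℕ → (Fin n → ℂ), ∃ lam : ℕ → ℂ, (∀ ν, x ν ∈ X) ∧
    Tendsto x atTop (𝓝 0) ∧ Tendsto (fun ν => lam ν • x ν) atTop (𝓝 v)}

/-- The vanishing order at `0` of a map `ℂ → E`: the least `m` with nonvanishing
`m`-th derivative at `0` (for holomorphic maps this is the usual order). -/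
noncomputable def holOrder {E : Type*} [NormedAddCommGroup E] [NormedSpace ℂ E]
    (Φ : ℂ → E) : ℕ :=
  sInf {m : ℕ | iteratedDeriv m Φ 0 ≠ 0}

/-! Let `p = ord Φ` and `q = ord Ψ`; both are positive, since a holomorphic map on a ball whose
Taylor coefficients at `0` all vanish is zero there. Reparametrising, `Φ (s ^ q)` and `Ψ (s ^ p)`
both vanish to order `p * q`, with `s⁻ᵖᵠ • Φ (s ^ q) → -v` and `s⁻ᵖᵠ • Ψ (s ^ p) → w`, so
`s⁻ᵖᵠ • (Ψ (s ^ p) - Φ (s ^ q)) → v + w` along any sequence `s → 0`, `s ≠ 0`. -/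

lemma holOrder_ne_zero {E : Type*} [NormedAddCommGroup E] [NormedSpace ℂ E] [CompleteSpace E]
    {f : ℂ → E} {r : ℝ} (hf : DifferentiableOn ℂ f (Metric.ball 0 r)) (hf0 : f 0 = 0)
    (hnc : ∃ t ∈ Metric.ball (0 : ℂ) r, f t ≠ 0) : holOrder f ≠ 0 := by
  obtain ⟨t, ht, hft⟩ := hnc
  have hne : ∃ m, iteratedDeriv m f 0 ≠ 0 := by
    by_contra! hzero
    exact hft (by simp [← Complex.taylorSeries_eq_on_ball hf ht, hzero])
  intro h
  have hmem : iteratedDeriv (holOrder f) f 0 ≠ 0 := Nat.sInf_mem hne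
  simp [h, hf0] at hmem

lemma tendsto_pow_nhdsNE_zero {𝕜 : Type*} [NormedDivisionRing 𝕜] {k : ℕ} (hk : k ≠ 0) :
    Tendsto (fun s : 𝕜 => s ^ k) (𝓝[≠] 0) (𝓝[≠] 0) := by
  refine tendsto_nhdsWithin_iff.2 ⟨?_, ?_⟩
  · simpa [zero_pow hk] using ((continuous_pow k).tendsto (0 : 𝕜)).mono_left nhdsWithin_le_nhds
  · filter_upwards [self_mem_nhdsWithin] with s hs using pow_ne_zero k hs

lemma Filter.Tendsto.inv_pow_smul_comp_pow {𝕜 E : Type*} [NormedField 𝕜] [AddCommGroup E]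
    [Module 𝕜 E] [TopologicalSpace E] {f : 𝕜 → E} {p k : ℕ} {L : E}
    (hf : Tendsto (fun t => (t ^ p)⁻¹ • f t) (𝓝[≠] 0) (𝓝 L)) (hk : k ≠ 0) :
    Tendsto (fun s => (s ^ (p * k))⁻¹ • f (s ^ k)) (𝓝[≠] 0) (𝓝 L) := by
  simpa only [Function.comp_def, ← pow_mul, mul_comm k p] using
    hf.comp (tendsto_pow_nhdsNE_zero hk)

lemma mem_relTangentCone_of_tendsto {n : ℕ} {X Y : Set (Fin n → ℂ)} {α : Type*} {l : Filter α}
    [l.NeBot] [l.IsCountablyGenerated] {x y : α → Fin n → ℂ} {lam : α → ℂ} {u : Fin n → ℂ}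
    (hx : Tendsto x l (𝓝[X] 0)) (hy : Tendsto y l (𝓝[Y] 0))
    (hu : Tendsto (fun a => lam a • (y a - x a)) l (𝓝 u)) : u ∈ relTangentCone X Y := by
  obtain ⟨s, hs⟩ := exists_seq_tendsto l
  rw [tendsto_nhdsWithin_iff] at hx hy
  obtain ⟨N, hN⟩ := eventually_atTop.1 (hs.eventually (hx.2.and hy.2))
  have hsN : Tendsto (fun ν => s (ν + N)) atTop l := hs.comp (tendsto_add_atTop_nat N)
  exact ⟨fun ν => x (s (ν + N)), fun ν => y (s (ν + N)), fun ν => lam (s (ν + N)),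
    fun ν => (hN _ (Nat.le_add_left N ν)).1, fun ν => (hN _ (Nat.le_add_left N ν)).2,
    hx.1.comp hsN, hy.1.comp hsN, hu.comp hsN⟩

lemma tendsto_nhdsWithin_of_image_ball_subset {E F : Type*} [SeminormedAddCommGroup E]
    [TopologicalSpace F] {f : E → F} {r : ℝ} {X : Set F} (hr : 0 < r)
    (hf : ContinuousOn f (Metric.ball 0 r)) (hfX : f '' Metric.ball 0 r ⊆ X) :
    Tendsto f (𝓝 0) (𝓝[X] (f 0)) := by
  rw [← nhdsWithin_eq_nhds.2 (Metric.ball_mem_nhds 0 hr)]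
  exact (hf _ (Metric.mem_ball_self hr)).tendsto_nhdsWithin (Set.mapsTo_iff_image_subset.2 hfX)

theorem stmt6_general {n : ℕ} (X Y : Set (Fin n → ℂ))
    (r : ℝ) (hr : 0 < r) (Φ Ψ : ℂ → (Fin n → ℂ))
    (hΦ : DifferentiableOn ℂ Φ (Metric.ball 0 r))
    (hΨ : DifferentiableOn ℂ Ψ (Metric.ball 0 r))
    (hΦ0 : Φ 0 = 0) (hΨ0 : Ψ 0 = 0)
    (hΦnc : ∃ t ∈ Metric.ball (0:ℂ) r, Φ t ≠ 0)
    (hΨnc : ∃ t ∈ Metric.ball (0:ℂ) r, Ψ t ≠ 0)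
    (hΦX : Φ '' Metric.ball 0 r ⊆ X) (hΨY : Ψ '' Metric.ball 0 r ⊆ Y)
    (v w : Fin n → ℂ)
    (hv : Tendsto (fun t : ℂ => (t ^ holOrder Φ)⁻¹ • Φ t) (𝓝[≠] 0) (𝓝 (-v)))
    (hw : Tendsto (fun t : ℂ => (t ^ holOrder Ψ)⁻¹ • Ψ t) (𝓝[≠] 0) (𝓝 w)) :
    v + w ∈ relTangentCone X Y := by
  set p := holOrder Φ
  set q := holOrder Ψ
  have hp : p ≠ 0 := holOrder_ne_zero hΦ hΦ0 hΦnc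
  have hq : q ≠ 0 := holOrder_ne_zero hΨ hΨ0 hΨnc
  have hΦX' : Tendsto Φ (𝓝 0) (𝓝[X] 0) :=
    hΦ0 ▸ tendsto_nhdsWithin_of_image_ball_subset hr hΦ.continuousOn hΦX
  have hΨY' : Tendsto Ψ (𝓝 0) (𝓝[Y] 0) :=
    hΨ0 ▸ tendsto_nhdsWithin_of_image_ball_subset hr hΨ.continuousOn hΨY
  have hx := hv.inv_pow_smul_comp_pow hq
  have hy := hw.inv_pow_smul_comp_pow hp
  rw [mul_comm q p] at hy
  refine mem_relTangentCone_of_tendsto (lam := fun s => (s ^ (p * q))⁻¹)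
    (hΦX'.comp ((tendsto_pow_nhdsNE_zero hq).mono_right nhdsWithin_le_nhds))
    (hΨY'.comp ((tendsto_pow_nhdsNE_zero hp).mono_right nhdsWithin_le_nhds)) ?_
  simpa only [Function.comp_def, smul_sub, sub_neg_eq_add, add_comm v w] using hy.sub hx

theorem stmt6 {n : ℕ} (X Y : Set (Fin n → ℂ)) (h0X : 0 ∈ X) (h0Y : 0 ∈ Y)
    (r : ℝ) (hr : 0 < r) (Φ Ψ : ℂ → (Fin n → ℂ))
    (hΦ : DifferentiableOn ℂ Φ (Metric.ball 0 r))
    (hΨ : DifferentiableOn ℂ Ψ (Metric.ball 0 r))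
    (hΦ0 : Φ 0 = 0) (hΨ0 : Ψ 0 = 0)
    (hΦnc : ∃ t ∈ Metric.ball (0:ℂ) r, Φ t ≠ 0)
    (hΨnc : ∃ t ∈ Metric.ball (0:ℂ) r, Ψ t ≠ 0)
    (hΦX : Φ '' Metric.ball 0 r ⊆ X) (hΨY : Ψ '' Metric.ball 0 r ⊆ Y)
    (v w : Fin n → ℂ)
    (hv : Tendsto (fun t : ℂ => (t ^ holOrder Φ)⁻¹ • Φ t) (𝓝[≠] 0) (𝓝 (-v)))
    (hw : Tendsto (fun t : ℂ => (t ^ holOrder Ψ)⁻¹ • Ψ t) (𝓝[≠] 0) (𝓝 w)) :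
    v + w ∈ relTangentCone X Y :=
  stmt6_general X Y r hr Φ Ψ hΦ hΨ hΦ0 hΨ0 hΦnc hΨnc hΦX hΨY v w hv hw
end

section
/- For the two cuspidal curves X = {(t², t³, 0) : t ∈ ℂ} and Y = {(τ², 0, τ³) : τ ∈ ℂ} in ℂ³, the relative tangent cone at the origin is C₀(X,Y) = {(x, y, z) ∈ ℂ³ : y² = z²}, i.e., the union of the two planes spanned by (1,0,0),(0,1,1) and by (1,0,0),(0,1,−1). -/
open Filter Topology

/-!
The rescaled secant from `(t², t³, 0)` to `(τ², 0, τ³)` is `λ(τ² - t², -t³, τ³)`.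
If `λτ³ → A` and `λt³ → B` with `t, τ → 0`, then `λ(τ⁴ + τ²t² + t⁴) → 0`, being bounded by a
multiple of `|λτ³||τ| + |λt³||t|`; hence `(λτ³)² - (λt³)² = λ(τ² - t²) · λ(τ⁴ + τ²t² + t⁴) → 0`
and `A² = B²`.

Conversely, with `s → 0`, `t = a s`, `τ = c s + d s²` and `λ = s⁻³`, the secants equal
`((c² - a²)/s + 2cd + d²s, -a³, (c + ds)³)`, which tend to `(2cd, -a³, c³)` once `a² = c²`:
this reaches every `(p, q, r)` with `q² = r² ≠ 0`. The remaining vectors `(p, 0, 0)` come from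
`t = 0`, `τ = d s`, `λ = s⁻²` with `d² = p`.
-/

theorem tendsto_zero_of_tendsto_pow {𝕜 ι : Type*} [NormedDivisionRing 𝕜] {l : Filter ι}
    {f : ι → 𝕜} {n : ℕ} (hn : n ≠ 0) (h : Tendsto (fun i => f i ^ n) l (𝓝 0)) :
    Tendsto f l (𝓝 0) := by
  rw [tendsto_zero_iff_norm_tendsto_zero] at h ⊢
  have hroot := h.rpow_const (p := (n : ℝ)⁻¹) (Or.inr (by positivity))
  rw [Real.zero_rpow (by positivity)] at hroot
  simpa only [norm_pow, Real.pow_rpow_inv_natCast (norm_nonneg _) hn] using hroot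

theorem tendsto_pi_fin_three_iff {α ι : Type*} [TopologicalSpace α] {l : Filter ι}
    {f : ι → Fin 3 → α} {v : Fin 3 → α} :
    Tendsto f l (𝓝 v) ↔
      Tendsto (f · 0) l (𝓝 (v 0)) ∧ Tendsto (f · 1) l (𝓝 (v 1)) ∧
        Tendsto (f · 2) l (𝓝 (v 2)) := by
  simp [tendsto_pi_nhds, Fin.forall_fin_succ]

section SecantLimits

variable {𝕜 ι : Type*} [NormedField 𝕜] {l : Filter ι} {lam t τ : ι → 𝕜} {A B C : 𝕜}

theorem tendsto_mul_quartic_of_tendsto_mul_cube (ht : Tendsto t l (𝓝 0))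
    (hτ : Tendsto τ l (𝓝 0)) (hA : Tendsto (fun i => lam i * τ i ^ 3) l (𝓝 A))
    (hB : Tendsto (fun i => lam i * t i ^ 3) l (𝓝 B)) :
    Tendsto (fun i => lam i * (τ i ^ 4 + τ i ^ 2 * t i ^ 2 + t i ^ 4)) l (𝓝 0) := by
  have hbound : Tendsto (fun i => 2 * (‖lam i * τ i ^ 3‖ * ‖τ i‖ + ‖lam i * t i ^ 3‖ * ‖t i‖))
      l (𝓝 0) := by
    simpa using ((hA.norm.mul hτ.norm).add (hB.norm.mul ht.norm)).const_mul 2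
  refine squeeze_zero_norm (fun i => ?_) hbound
  have hquartic : ‖τ i ^ 4 + τ i ^ 2 * t i ^ 2 + t i ^ 4‖ ≤ 2 * (‖τ i‖ ^ 4 + ‖t i‖ ^ 4) :=
    calc _ ≤ ‖τ i‖ ^ 4 + ‖τ i‖ ^ 2 * ‖t i‖ ^ 2 + ‖t i‖ ^ 4 :=
          norm_add₃_le.trans_eq (by simp only [norm_mul, norm_pow])
      _ ≤ _ := by nlinarith [sq_nonneg (‖τ i‖ ^ 2 - ‖t i‖ ^ 2)]
  calc _ ≤ ‖lam i‖ * (2 * (‖τ i‖ ^ 4 + ‖t i‖ ^ 4)) := by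
        rw [norm_mul]; gcongr
    _ = _ := by simp only [norm_mul, norm_pow]; ring

theorem sq_eq_sq_of_tendsto_mul_cube [l.NeBot] (ht : Tendsto t l (𝓝 0))
    (hτ : Tendsto τ l (𝓝 0)) (hA : Tendsto (fun i => lam i * τ i ^ 3) l (𝓝 A))
    (hB : Tendsto (fun i => lam i * t i ^ 3) l (𝓝 B))
    (hC : Tendsto (fun i => lam i * (τ i ^ 2 - t i ^ 2)) l (𝓝 C)) : A ^ 2 = B ^ 2 := by
  have hdiff : Tendsto (fun i => (lam i * τ i ^ 3) ^ 2 - (lam i * t i ^ 3) ^ 2) l (𝓝 0) := by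
    have := hC.mul (tendsto_mul_quartic_of_tendsto_mul_cube ht hτ hA hB)
    rw [mul_zero] at this
    exact this.congr fun i => by ring
  exact sub_eq_zero.1 (tendsto_nhds_unique ((hA.pow 2).sub (hB.pow 2)) hdiff)

end SecantLimits

def cuspX (t : ℂ) : Fin 3 → ℂ := ![t ^ 2, t ^ 3, 0]

def cuspY (τ : ℂ) : Fin 3 → ℂ := ![τ ^ 2, 0, τ ^ 3]

theorem continuous_cuspX : Continuous cuspX := by
  unfold cuspX; fun_prop

theorem continuous_cuspY : Continuous cuspY := by
  unfold cuspY; fun_prop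

def IsCuspSecantLimit (p q r : ℂ) : Prop :=
  ∃ t τ lam : ℕ → ℂ, Tendsto t atTop (𝓝 0) ∧ Tendsto τ atTop (𝓝 0) ∧
    Tendsto (fun ν => lam ν * (τ ν ^ 2 - t ν ^ 2)) atTop (𝓝 p) ∧
    Tendsto (fun ν => -(lam ν * t ν ^ 3)) atTop (𝓝 q) ∧
    Tendsto (fun ν => lam ν * τ ν ^ 3) atTop (𝓝 r)

theorem mem_relTangentCone_cusps_iff {v : Fin 3 → ℂ} :
    v ∈ relTangentCone {v | ∃ t, v = cuspX t} {v | ∃ τ, v = cuspY τ} ↔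
      IsCuspSecantLimit (v 0) (v 1) (v 2) := by
  have hsecant (lam t τ : ℕ → ℂ) :
      Tendsto (fun ν => lam ν • (cuspY (τ ν) - cuspX (t ν))) atTop (𝓝 v) ↔
        Tendsto (fun ν => lam ν * (τ ν ^ 2 - t ν ^ 2)) atTop (𝓝 (v 0)) ∧
        Tendsto (fun ν => -(lam ν * t ν ^ 3)) atTop (𝓝 (v 1)) ∧
        Tendsto (fun ν => lam ν * τ ν ^ 3) atTop (𝓝 (v 2)) := by
    simp [tendsto_pi_fin_three_iff, cuspX, cuspY]
  constructor
  · rintro ⟨x, y, lam, hxX, hyY, hx, hy, hlim⟩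
    choose t ht using hxX
    choose τ hτ using hyY
    obtain rfl : x = fun ν => cuspX (t ν) := funext ht
    obtain rfl : y = fun ν => cuspY (τ ν) := funext hτ
    have ht0 : Tendsto t atTop (𝓝 0) :=
      tendsto_zero_of_tendsto_pow two_ne_zero (by simpa [cuspX] using tendsto_pi_nhds.1 hx 0)
    have hτ0 : Tendsto τ atTop (𝓝 0) :=
      tendsto_zero_of_tendsto_pow two_ne_zero (by simpa [cuspY] using tendsto_pi_nhds.1 hy 0)
    exact ⟨t, τ, lam, ht0, hτ0, (hsecant lam t τ).1 hlim⟩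
  · rintro ⟨t, τ, lam, ht, hτ, hlim⟩
    refine ⟨fun ν => cuspX (t ν), fun ν => cuspY (τ ν), lam, fun ν => ⟨t ν, rfl⟩,
      fun ν => ⟨τ ν, rfl⟩, ?_, ?_, (hsecant lam t τ).2 hlim⟩
    · exact (continuous_cuspX.tendsto' 0 0 (by simp [cuspX])).comp ht
    · exact (continuous_cuspY.tendsto' 0 0 (by simp [cuspY])).comp hτ

theorem IsCuspSecantLimit.sq_eq_sq {p q r : ℂ} (h : IsCuspSecantLimit p q r) : q ^ 2 = r ^ 2 := by
  obtain ⟨t, τ, lam, ht, hτ, hp, hq, hr⟩ := h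
  have hq' : Tendsto (fun ν => lam ν * t ν ^ 3) atTop (𝓝 (-q)) := by simpa using hq.neg
  simpa using (sq_eq_sq_of_tendsto_mul_cube ht hτ hr hq' hp).symm

theorem isCuspSecantLimit_zero_zero {s : ℕ → ℂ} (hs : Tendsto s atTop (𝓝 0))
    (hs0 : ∀ ν, s ν ≠ 0) (p : ℂ) : IsCuspSecantLimit p 0 0 := by
  obtain ⟨d, hd⟩ := IsAlgClosed.exists_pow_nat_eq p two_pos
  refine ⟨fun _ => 0, fun ν => d * s ν, fun ν => (s ν ^ 2)⁻¹, tendsto_const_nhds, ?_, ?_, ?_, ?_⟩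
  · simpa using hs.const_mul d
  · refine tendsto_const_nhds.congr fun ν => ?_
    field_simp [hs0 ν]
    rw [← hd]
    ring
  · simp
  · have : Tendsto (fun ν => d ^ 3 * s ν) atTop (𝓝 0) := by simpa using hs.const_mul (d ^ 3)
    refine this.congr fun ν => ?_
    field_simp [hs0 ν]

theorem isCuspSecantLimit_of_ne_zero {s : ℕ → ℂ} (hs : Tendsto s atTop (𝓝 0))
    (hs0 : ∀ ν, s ν ≠ 0) {p q r : ℂ} (hr : r ≠ 0) (hqr : q ^ 2 = r ^ 2) :
    IsCuspSecantLimit p q r := by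
  obtain ⟨c, hc⟩ := IsAlgClosed.exists_pow_nat_eq r three_pos
  have hc0 : c ≠ 0 := by rintro rfl; simp [eq_comm, hr] at hc
  obtain ⟨a, ha, ha3⟩ : ∃ a : ℂ, a ^ 2 = c ^ 2 ∧ -a ^ 3 = q := by
    refine ⟨-(q / r) * c, ?_, ?_⟩
    · field_simp
      exact hqr
    · field_simp
      linear_combination q ^ 3 * hc + q * r * hqr
  obtain ⟨d, hd⟩ : ∃ d : ℂ, 2 * c * d = p := ⟨p / (2 * c), by field_simp⟩
  refine ⟨fun ν => a * s ν, fun ν => c * s ν + d * s ν ^ 2, fun ν => (s ν ^ 3)⁻¹,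
    by simpa using hs.const_mul a, by simpa using (hs.const_mul c).add ((hs.pow 2).const_mul d),
    ?_, ?_, ?_⟩
  · have : Tendsto (fun ν => 2 * c * d + d ^ 2 * s ν) atTop (𝓝 p) := by
      simpa [hd] using tendsto_const_nhds.add (hs.const_mul (d ^ 2))
    refine this.congr fun ν => ?_
    field_simp [hs0 ν]
    linear_combination ha
  · refine tendsto_const_nhds.congr fun ν => ?_
    field_simp [hs0 ν]
    linear_combination -ha3
  · have : Tendsto (fun ν => (c + d * s ν) ^ 3) atTop (𝓝 r) := by
      simpa [hc] using ((tendsto_const_nhds (x := c)).add (hs.const_mul d)).pow 3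
    refine this.congr fun ν => ?_
    field_simp [hs0 ν]

theorem isCuspSecantLimit_of_sq_eq_sq {p q r : ℂ} (h : q ^ 2 = r ^ 2) :
    IsCuspSecantLimit p q r := by
  have hs := tendsto_one_div_add_atTop_nhds_zero_nat (𝕜 := ℂ)
  have hs0 (ν : ℕ) : 1 / ((ν : ℂ) + 1) ≠ 0 := one_div_ne_zero (Nat.cast_add_one_ne_zero ν)
  rcases eq_or_ne r 0 with rfl | hr
  · obtain rfl : q = 0 := by simpa using h
    exact isCuspSecantLimit_zero_zero hs hs0 p
  · exact isCuspSecantLimit_of_ne_zero hs hs0 hr h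

theorem stmt9 :
    relTangentCone
      {v : Fin 3 → ℂ | ∃ t : ℂ, v = ![t ^ 2, t ^ 3, 0]}
      {v : Fin 3 → ℂ | ∃ τ : ℂ, v = ![τ ^ 2, 0, τ ^ 3]}
    = {v : Fin 3 → ℂ | v 1 ^ 2 = v 2 ^ 2} := by
  ext v
  exact mem_relTangentCone_cusps_iff.trans
    ⟨IsCuspSecantLimit.sq_eq_sq, isCuspSecantLimit_of_sq_eq_sq⟩
end

section
/- The relative tangent cone of parametrized curves with common tangent line is invariant under adding tangent directions: let Φ(t) = (t^k, φ₂(t), …, φₙ(t)) and Ψ(τ) = (τ^l, ψ₂(τ), …, ψₙ(τ)) be injective holomorphic maps on K(r) with all ord φᵢ > k and ord ψᵢ > l, and let X = Φ(K(r)), Y = Ψ(K(r)). Then C₀(X,Y) + ℂ·e₁ = C₀(X,Y), where e₁ = (1,0,…,0). -/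
open Filter Topology

/-!
Bounded multipliers `λᵥ` only produce the vector `0`, which is also produced by `xᵥ = yᵥ = 0`,
`λᵥ = ν`; so every `v ∈ C₀(X,Y)` comes with witnesses `xᵥ`, `yᵥ = Ψ(τᵥ)`, `λᵥ` with `|λᵥ| → ∞`.
Replace `τᵥ` by an `l`-th root `σᵥ` of `τᵥ ^ l + c / λᵥ` chosen close to `τᵥ`. The first coordinate
of `λᵥ (Ψ(σᵥ) - Ψ(τᵥ))` is then exactly `c`. In every other coordinate `ψᵢ = τ ^ (l + 1) gᵢ` with
`gᵢ` holomorphic, and `σ ^ (l + 1) - τ ^ (l + 1) = σ (σ ^ l - τ ^ l) + τ ^ l (σ - τ)` makes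
`λᵥ (ψᵢ(σᵥ) - ψᵢ(τᵥ)) = O(|c| (|σᵥ| + |τᵥ|)) → 0`. Hence `xᵥ`, `Ψ(σᵥ)`, `λᵥ` witness `v + c e₁`.
-/

theorem Complex.norm_one_add_cpow_inv_sub_one_le (l : ℕ) {w : ℂ} (hw : ‖w‖ ≤ 1 / 2) :
    ‖(1 + w) ^ ((l : ℂ)⁻¹) - 1‖ ≤ 4 * ‖w‖ := by
  have hw1 : 1 + w ≠ 0 := fun h => by
    rw [eq_neg_of_add_eq_zero_right h, norm_neg, norm_one] at hw
    norm_num at hw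
  have hinv : ‖((l : ℂ)⁻¹)‖ ≤ 1 := by
    rcases l.eq_zero_or_pos with rfl | hl
    · simp
    · rw [norm_inv, Complex.norm_natCast]
      exact inv_le_one_of_one_le₀ (by exact_mod_cast hl)
  have hs : ‖Complex.log (1 + w) * (l : ℂ)⁻¹‖ ≤ 3 / 2 * ‖w‖ := by
    rw [norm_mul]
    exact (mul_le_of_le_one_right (norm_nonneg _) hinv).trans
      (Complex.norm_log_one_add_half_le_self hw)
  rw [Complex.cpow_def_of_ne_zero hw1]
  calc ‖Complex.exp (Complex.log (1 + w) * (l : ℂ)⁻¹) - 1‖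
      ≤ 2 * ‖Complex.log (1 + w) * (l : ℂ)⁻¹‖ := Complex.norm_exp_sub_one_le (by linarith)
    _ ≤ 4 * ‖w‖ := by linarith [norm_nonneg w]

theorem Complex.exists_pow_eq_pow_add {l : ℕ} (hl : l ≠ 0) (τ d : ℂ) :
    ∃ σ : ℂ, σ ^ l = τ ^ l + d ∧
      (2 * ‖d‖ ≤ ‖τ‖ ^ l → ‖τ‖ ^ l * ‖σ - τ‖ ≤ 4 * ‖τ‖ * ‖d‖) := by
  have hroot : ((τ ^ l + d) ^ ((l : ℂ)⁻¹)) ^ l = τ ^ l + d := Complex.cpow_nat_inv_pow _ hl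
  rcases eq_or_ne τ 0 with rfl | hτ
  · exact ⟨_, hroot, fun _ => by simp [zero_pow hl]⟩
  by_cases hd : 2 * ‖d‖ ≤ ‖τ‖ ^ l
  · have hτl : 0 < ‖τ‖ ^ l := by positivity
    set w := d / τ ^ l
    have hτw : τ ^ l * w = d := mul_div_cancel₀ d (pow_ne_zero l hτ)
    have hτw' : ‖τ‖ ^ l * ‖w‖ = ‖d‖ := by rw [← norm_pow, ← norm_mul, hτw]
    have hw : ‖w‖ ≤ 1 / 2 := by nlinarith
    refine ⟨τ * (1 + w) ^ ((l : ℂ)⁻¹), ?_, fun _ => ?_⟩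
    · rw [mul_pow, Complex.cpow_nat_inv_pow _ hl, mul_add, mul_one, hτw]
    · calc ‖τ‖ ^ l * ‖τ * (1 + w) ^ ((l : ℂ)⁻¹) - τ‖
          = ‖τ‖ * ‖τ‖ ^ l * ‖(1 + w) ^ ((l : ℂ)⁻¹) - 1‖ := by
            rw [← mul_sub_one, norm_mul]; ring
        _ ≤ ‖τ‖ * ‖τ‖ ^ l * (4 * ‖w‖) := by
            gcongr; exact Complex.norm_one_add_cpow_inv_sub_one_le l hw
        _ = 4 * ‖τ‖ * ‖d‖ := by rw [← hτw']; ring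
  · exact ⟨_, hroot, fun h => absurd h hd⟩

theorem tendsto_nhds_zero_of_tendsto_pow {𝕜 α : Type*} [NormedDivisionRing 𝕜] {L : Filter α}
    {z : α → 𝕜} {k : ℕ} (h : Tendsto (fun ν => z ν ^ k) L (𝓝 0)) : Tendsto z L (𝓝 0) := by
  rw [NormedAddGroup.tendsto_nhds_zero] at h ⊢
  intro ε hε
  filter_upwards [h (ε ^ k) (pow_pos hε k)] with ν hν
  rw [norm_pow] at hν
  exact lt_of_pow_lt_pow_left₀ k hε.le hν

theorem AnalyticAt.exists_eq_pow_mul_of_iteratedDeriv_eq_zero {f : ℂ → ℂ} (hf : AnalyticAt ℂ f 0)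
    {l : ℕ} (hord : ∀ m ≤ l, iteratedDeriv m f 0 = 0) :
    ∃ g : ℂ → ℂ, AnalyticAt ℂ g 0 ∧ ∀ z, f z = z ^ (l + 1) * g z := by
  obtain ⟨g, hg, hfg⟩ := hf.exists_eq_sum_add_pow_mul (l + 1)
  refine ⟨g, hg, fun z => ?_⟩
  rw [hfg z, Finset.sum_eq_zero fun m hm => by
    rw [hord m (Nat.lt_succ_iff.mp (Finset.mem_range.mp hm)), smul_zero], zero_add, smul_eq_mul]

theorem norm_pow_succ_mul_le {g : ℂ → ℂ} {M a : ℝ} {l : ℕ} {z : ℂ} (hg : ‖g z‖ ≤ M)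
    (hz : ‖z‖ ^ l ≤ a) : ‖z ^ (l + 1) * g z‖ ≤ a * ‖z‖ * M := by
  rw [norm_mul, norm_pow, pow_succ]
  exact mul_le_mul (mul_le_mul_of_nonneg_right hz (norm_nonneg z)) hg (norm_nonneg _)
    (mul_nonneg ((pow_nonneg (norm_nonneg z) l).trans hz) (norm_nonneg z))

theorem norm_pow_succ_mul_sub_le {g : ℂ → ℂ} {s : Set ℂ} {K : NNReal} {M : ℝ}
    (hgK : LipschitzOnWith K g s) (hgM : ∀ z ∈ s, ‖g z‖ ≤ M) {l : ℕ} {σ τ d : ℂ}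
    (hσ : σ ∈ s) (hτ : τ ∈ s) (hτ1 : ‖τ‖ ≤ 1) (hpow : σ ^ l = τ ^ l + d)
    (hnear : 2 * ‖d‖ ≤ ‖τ‖ ^ l → ‖τ‖ ^ l * ‖σ - τ‖ ≤ 4 * ‖τ‖ * ‖d‖) :
    ‖σ ^ (l + 1) * g σ - τ ^ (l + 1) * g τ‖ ≤ 4 * (M + K) * ‖d‖ * (‖σ‖ + ‖τ‖) := by
  have hM : 0 ≤ M := (norm_nonneg _).trans (hgM σ hσ)
  have hK : (0 : ℝ) ≤ K := K.coe_nonneg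
  have hσn := norm_nonneg σ
  have hτn := norm_nonneg τ
  have hdn := norm_nonneg d
  by_cases hd : 2 * ‖d‖ ≤ ‖τ‖ ^ l
  · have hlip : ‖g σ - g τ‖ ≤ K * ‖σ - τ‖ := by
      simpa only [dist_eq_norm] using hgK.dist_le_mul σ hσ τ hτ
    have hid : σ ^ (l + 1) * g σ - τ ^ (l + 1) * g τ =
        (σ * d + τ ^ l * (σ - τ)) * g σ + τ * τ ^ l * (g σ - g τ) := by
      rw [pow_succ, pow_succ, hpow]; ring
    have hA : ‖(σ * d + τ ^ l * (σ - τ)) * g σ‖ ≤ (‖σ‖ * ‖d‖ + 4 * ‖τ‖ * ‖d‖) * M := by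
      rw [norm_mul]
      refine mul_le_mul ?_ (hgM σ hσ) (norm_nonneg _) (by positivity)
      refine (norm_add_le _ _).trans ?_
      rw [norm_mul, norm_mul, norm_pow]
      linarith [hnear hd]
    have hB : ‖τ * τ ^ l * (g σ - g τ)‖ ≤ ‖τ‖ * (K * (4 * ‖τ‖ * ‖d‖)) := by
      calc ‖τ * τ ^ l * (g σ - g τ)‖ ≤ ‖τ‖ * ‖τ‖ ^ l * (K * ‖σ - τ‖) := by
            rw [norm_mul, norm_mul, norm_pow]; gcongr
        _ = ‖τ‖ * (K * (‖τ‖ ^ l * ‖σ - τ‖)) := by ring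
        _ ≤ ‖τ‖ * (K * (4 * ‖τ‖ * ‖d‖)) :=
          mul_le_mul_of_nonneg_left (mul_le_mul_of_nonneg_left (hnear hd) hK) hτn
    rw [hid]
    refine (norm_add_le _ _).trans ((add_le_add hA hB).trans ?_)
    nlinarith [mul_nonneg (mul_nonneg hK hdn) (mul_nonneg hτn (sub_nonneg.2 hτ1)),
      mul_nonneg hM (mul_nonneg hσn hdn), mul_nonneg hK (mul_nonneg hσn hdn),
      mul_nonneg hM (mul_nonneg hτn hdn)]
  · have hσl : ‖σ‖ ^ l ≤ 3 * ‖d‖ := by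
      rw [← norm_pow, hpow]
      refine (norm_add_le _ _).trans ?_
      rw [norm_pow]
      linarith
    refine (norm_sub_le _ _).trans ((add_le_add (norm_pow_succ_mul_le (hgM σ hσ) hσl)
      (norm_pow_succ_mul_le (g := g) (hgM τ hτ) (a := 2 * ‖d‖) (by linarith))).trans ?_)
    nlinarith [mul_nonneg hM (mul_nonneg hσn hdn), mul_nonneg hK (mul_nonneg hσn hdn),
      mul_nonneg hM (mul_nonneg hτn hdn), mul_nonneg hK (mul_nonneg hτn hdn)]

theorem tendsto_mul_sub_of_pow_eq_pow_add {f : ℂ → ℂ} (hf : AnalyticAt ℂ f 0) {l : ℕ}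
    (hord : ∀ m ≤ l, iteratedDeriv m f 0 = 0) {σ τ d lam : ℕ → ℂ} {C : ℝ}
    (hσ : Tendsto σ atTop (𝓝 0)) (hτ : Tendsto τ atTop (𝓝 0))
    (hpow : ∀ ν, σ ν ^ l = τ ν ^ l + d ν)
    (hnear : ∀ ν, 2 * ‖d ν‖ ≤ ‖τ ν‖ ^ l → ‖τ ν‖ ^ l * ‖σ ν - τ ν‖ ≤ 4 * ‖τ ν‖ * ‖d ν‖)
    (hlamd : ∀ ν, ‖lam ν * d ν‖ ≤ C) :
    Tendsto (fun ν => lam ν * (f (σ ν) - f (τ ν))) atTop (𝓝 0) := by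
  obtain ⟨g, hg, hfg⟩ := hf.exists_eq_pow_mul_of_iteratedDeriv_eq_zero hord
  obtain ⟨K, t, ht, hgK⟩ := (hg.contDiffAt (n := 1)).exists_lipschitzOnWith
  have hgM : ∀ᶠ z in 𝓝 0, ‖g z‖ ≤ ‖g 0‖ + 1 :=
    hg.continuousAt.norm.eventually (ge_mem_nhds (lt_add_one _))
  set s := t ∩ {z | ‖g z‖ ≤ ‖g 0‖ + 1}
  have hs : s ∈ 𝓝 0 := inter_mem ht hgM
  refine squeeze_zero_norm' (a := fun ν => 4 * (‖g 0‖ + 1 + K) * C * (‖σ ν‖ + ‖τ ν‖)) ?_ ?_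
  · filter_upwards [hσ hs, hτ hs, hτ (Metric.closedBall_mem_nhds 0 one_pos)]
      with ν hσs hτs hτ1
    rw [norm_mul, hfg, hfg]
    calc ‖lam ν‖ * ‖σ ν ^ (l + 1) * g (σ ν) - τ ν ^ (l + 1) * g (τ ν)‖
        ≤ ‖lam ν‖ * (4 * (‖g 0‖ + 1 + K) * ‖d ν‖ * (‖σ ν‖ + ‖τ ν‖)) :=
          mul_le_mul_of_nonneg_left (norm_pow_succ_mul_sub_le (hgK.mono Set.inter_subset_left)
            (fun z hz => hz.2) hσs hτs (mem_closedBall_zero_iff.mp hτ1) (hpow ν) (hnear ν))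
            (norm_nonneg _)
      _ = 4 * (‖g 0‖ + 1 + K) * ‖lam ν * d ν‖ * (‖σ ν‖ + ‖τ ν‖) := by rw [norm_mul]; ring
      _ ≤ 4 * (‖g 0‖ + 1 + K) * C * (‖σ ν‖ + ‖τ ν‖) := by gcongr; exact hlamd ν
  · simpa using ((hσ.norm.add hτ.norm).const_mul (4 * (‖g 0‖ + 1 + K) * C))

theorem eq_zero_of_tendsto_smul_of_not_tendsto_norm {𝕜 E : Type*} [NormedField 𝕜]
    [NormedAddCommGroup E] [NormedSpace 𝕜 E] {z : ℕ → E} {lam : ℕ → 𝕜} {v : E}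
    (hz : Tendsto z atTop (𝓝 0)) (hlim : Tendsto (fun ν => lam ν • z ν) atTop (𝓝 v))
    (hlam : ¬Tendsto (fun ν => ‖lam ν‖) atTop atTop) : v = 0 := by
  simp only [tendsto_atTop, not_forall, not_eventually, not_le] at hlam
  obtain ⟨b, hb⟩ := hlam
  have hbz : Tendsto (fun ν => b * ‖z ν‖) atTop (𝓝 0) := by
    simpa using hz.norm.const_mul b
  refine norm_le_zero_iff.mp (le_of_tendsto_of_tendsto_of_frequently hlim.norm hbz ?_)
  exact hb.mono fun ν hν => by
    rw [norm_smul]; exact mul_le_mul_of_nonneg_right hν.le (norm_nonneg _)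

namespace relTangentCone

variable {n : ℕ} {X Y : Set (Fin n → ℂ)}

theorem mem_of_eventually {x y : ℕ → Fin n → ℂ} {lam : ℕ → ℂ} {v : Fin n → ℂ}
    (hxy : ∀ᶠ ν in atTop, x ν ∈ X ∧ y ν ∈ Y) (hx : Tendsto x atTop (𝓝 0))
    (hy : Tendsto y atTop (𝓝 0)) (hlim : Tendsto (fun ν => lam ν • (y ν - x ν)) atTop (𝓝 v)) :
    v ∈ relTangentCone X Y := by
  obtain ⟨N, hN⟩ := eventually_atTop.mp hxy
  exact ⟨fun ν => x (ν + N), fun ν => y (ν + N), fun ν => lam (ν + N),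
    fun ν => (hN _ (Nat.le_add_left N ν)).1, fun ν => (hN _ (Nat.le_add_left N ν)).2,
    (tendsto_add_atTop_iff_nat N).mpr hx, (tendsto_add_atTop_iff_nat N).mpr hy,
    (tendsto_add_atTop_iff_nat (f := fun ν => lam ν • (y ν - x ν)) N).mpr hlim⟩

theorem exists_tendsto_norm_atTop (hX : 0 ∈ X) (hY : 0 ∈ Y) {v : Fin n → ℂ}
    (hv : v ∈ relTangentCone X Y) :
    ∃ x y : ℕ → Fin n → ℂ, ∃ lam : ℕ → ℂ, (∀ ν, x ν ∈ X) ∧ (∀ ν, y ν ∈ Y) ∧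
      Tendsto x atTop (𝓝 0) ∧ Tendsto y atTop (𝓝 0) ∧
      Tendsto (fun ν => ‖lam ν‖) atTop atTop ∧
      Tendsto (fun ν => lam ν • (y ν - x ν)) atTop (𝓝 v) := by
  obtain ⟨x, y, lam, hxX, hyY, hx, hy, hlim⟩ := hv
  by_cases hlam : Tendsto (fun ν => ‖lam ν‖) atTop atTop
  · exact ⟨x, y, lam, hxX, hyY, hx, hy, hlam, hlim⟩
  have hv : v = 0 :=
    eq_zero_of_tendsto_smul_of_not_tendsto_norm (by simpa using hy.sub hx) hlim hlam
  refine ⟨0, 0, fun ν => ν, fun _ => hX, fun _ => hY, tendsto_const_nhds, tendsto_const_nhds,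
    ?_, by simp [hv]⟩
  simpa using tendsto_natCast_atTop_atTop (R := ℝ)

end relTangentCone

theorem apply_zero_eq_zero {n : ℕ} {r : ℝ} (hr : 0 < r) {l : ℕ} (hl : l ≠ 0)
    {Ψ : ℂ → Fin (n + 1) → ℂ} (hΨ1 : ∀ τ ∈ Metric.ball (0 : ℂ) r, Ψ τ 0 = τ ^ l)
    (hΨord : ∀ i : Fin (n + 1), i ≠ 0 → ∀ m ≤ l, iteratedDeriv m (fun τ => Ψ τ i) 0 = 0) :
    Ψ 0 = 0 := by
  funext i
  rcases eq_or_ne i 0 with rfl | hi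
  · rw [hΨ1 0 (Metric.mem_ball_self hr), zero_pow hl, Pi.zero_apply]
  · simpa using hΨord i hi 0 (Nat.zero_le l)

theorem tendsto_smul_sub_of_pow_eq_pow_add_div {n : ℕ} {r : ℝ} (hr : 0 < r) {l : ℕ}
    {Ψ : ℂ → Fin (n + 1) → ℂ} (hΨ : AnalyticAt ℂ Ψ 0)
    (hΨ1 : ∀ τ ∈ Metric.ball (0 : ℂ) r, Ψ τ 0 = τ ^ l)
    (hΨord : ∀ i : Fin (n + 1), i ≠ 0 → ∀ m ≤ l, iteratedDeriv m (fun τ => Ψ τ i) 0 = 0)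
    {σ τ lam : ℕ → ℂ} {c : ℂ} (hσ : Tendsto σ atTop (𝓝 0)) (hτ : Tendsto τ atTop (𝓝 0))
    (hlam : Tendsto (fun ν => ‖lam ν‖) atTop atTop)
    (hpow : ∀ ν, σ ν ^ l = τ ν ^ l + c / lam ν)
    (hnear : ∀ ν, 2 * ‖c / lam ν‖ ≤ ‖τ ν‖ ^ l →
      ‖τ ν‖ ^ l * ‖σ ν - τ ν‖ ≤ 4 * ‖τ ν‖ * ‖c / lam ν‖) :
    Tendsto (fun ν => lam ν • (Ψ (σ ν) - Ψ (τ ν))) atTop (𝓝 (c • Pi.single 0 1)) := by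
  have hball : Metric.ball (0 : ℂ) r ∈ 𝓝 0 := Metric.ball_mem_nhds 0 hr
  refine tendsto_pi_nhds.mpr fun i => ?_
  simp only [Pi.smul_apply, Pi.sub_apply, smul_eq_mul]
  rcases eq_or_ne i 0 with rfl | hi
  · rw [Pi.single_eq_same, mul_one]
    refine tendsto_const_nhds.congr' ?_
    filter_upwards [hσ.eventually_mem hball, hτ.eventually_mem hball,
      hlam.eventually_gt_atTop 0] with ν hσν hτν hlamν
    rw [hΨ1 _ hσν, hΨ1 _ hτν, hpow, add_sub_cancel_left,
      mul_div_cancel₀ c (norm_pos_iff.mp hlamν)]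
  · rw [Pi.single_eq_of_ne hi, mul_zero]
    have hlamd : ∀ ν, ‖lam ν * (c / lam ν)‖ ≤ ‖c‖ := fun ν => by
      rcases eq_or_ne (lam ν) 0 with h | h
      · simp [h]
      · rw [mul_div_cancel₀ c h]
    exact tendsto_mul_sub_of_pow_eq_pow_add (f := fun z => Ψ z i)
      (analyticAt_pi_iff (f := fun i z => Ψ z i).mp hΨ i) (hΨord i hi) hσ hτ hpow hnear hlamd

theorem add_smul_single_mem_relTangentCone {n : ℕ} {r : ℝ} (hr : 0 < r) {l : ℕ} (hl : l ≠ 0)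
    {Ψ : ℂ → Fin (n + 1) → ℂ} (hΨ : DifferentiableOn ℂ Ψ (Metric.ball 0 r))
    (hΨ1 : ∀ τ ∈ Metric.ball (0 : ℂ) r, Ψ τ 0 = τ ^ l)
    (hΨord : ∀ i : Fin (n + 1), i ≠ 0 → ∀ m ≤ l, iteratedDeriv m (fun τ => Ψ τ i) 0 = 0)
    {X : Set (Fin (n + 1) → ℂ)} {x y : ℕ → Fin (n + 1) → ℂ} {lam : ℕ → ℂ} {v : Fin (n + 1) → ℂ}
    (hxX : ∀ ν, x ν ∈ X) (hyY : ∀ ν, y ν ∈ Ψ '' Metric.ball 0 r)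
    (hx : Tendsto x atTop (𝓝 0)) (hy : Tendsto y atTop (𝓝 0))
    (hlam : Tendsto (fun ν => ‖lam ν‖) atTop atTop)
    (hlim : Tendsto (fun ν => lam ν • (y ν - x ν)) atTop (𝓝 v)) (c : ℂ) :
    v + c • Pi.single 0 1 ∈ relTangentCone X (Ψ '' Metric.ball 0 r) := by
  have hball : Metric.ball (0 : ℂ) r ∈ 𝓝 0 := Metric.ball_mem_nhds 0 hr
  have hΨan : AnalyticAt ℂ Ψ 0 := hΨ.analyticAt hball
  have hΨ0 : Ψ 0 = 0 := apply_zero_eq_zero hr hl hΨ1 hΨord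
  choose τ hτr hΨτ using hyY
  have hτ : Tendsto τ atTop (𝓝 0) := tendsto_nhds_zero_of_tendsto_pow (k := l) <|
    (tendsto_pi_nhds.mp hy 0).congr fun ν => by rw [← hΨτ, hΨ1 _ (hτr ν)]
  have hd : Tendsto (fun ν => c / lam ν) atTop (𝓝 0) := tendsto_zero_iff_norm_tendsto_zero.mpr <|
    (tendsto_const_nhds.div_atTop hlam).congr fun ν => (norm_div c (lam ν)).symm
  choose σ hσpow hσnear using fun ν => Complex.exists_pow_eq_pow_add hl (τ ν) (c / lam ν)
  have hσ : Tendsto σ atTop (𝓝 0) := tendsto_nhds_zero_of_tendsto_pow (k := l) <| by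
    simpa [hσpow, zero_pow hl] using (hτ.pow l).add hd
  refine relTangentCone.mem_of_eventually (y := fun ν => Ψ (σ ν)) (lam := lam)
    ((hσ.eventually_mem hball).mono fun ν hν => ⟨hxX ν, σ ν, hν, rfl⟩) hx
    (hΨ0 ▸ hΨan.continuousAt.tendsto.comp hσ) ?_
  have hsplit : (fun ν => lam ν • (Ψ (σ ν) - x ν)) =
      fun ν => lam ν • (Ψ (σ ν) - Ψ (τ ν)) + lam ν • (y ν - x ν) := by
    funext ν; rw [← smul_add, hΨτ]; abel_nf
  rw [hsplit, add_comm v]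
  exact (tendsto_smul_sub_of_pow_eq_pow_add_div hr hΨan hΨ1 hΨord hσ hτ hlam hσpow hσnear).add
    hlim

theorem stmt11_general    {n : ℕ} (r : ℝ) (hr : 0 < r) (k l : ℕ) (hk : 0 < k) (hl : 0 < l)
    (Φ Ψ : ℂ → (Fin (n + 1) → ℂ))
    (hΨ : DifferentiableOn ℂ Ψ (Metric.ball 0 r))
    (hΦ1 : ∀ t ∈ Metric.ball (0:ℂ) r, Φ t 0 = t ^ k)
    (hΨ1 : ∀ τ ∈ Metric.ball (0:ℂ) r, Ψ τ 0 = τ ^ l)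
    (hΦord : ∀ i : Fin (n + 1), i ≠ 0 → ∀ m ≤ k, iteratedDeriv m (fun t => Φ t i) 0 = 0)
    (hΨord : ∀ i : Fin (n + 1), i ≠ 0 → ∀ m ≤ l, iteratedDeriv m (fun τ => Ψ τ i) 0 = 0)
 :
    {u : Fin (n + 1) → ℂ | ∃ v ∈ relTangentCone (Φ '' Metric.ball 0 r) (Ψ '' Metric.ball 0 r),
        ∃ c : ℂ, u = v + c • ((Pi.single (0 : Fin (n + 1)) (1 : ℂ)) : Fin (n + 1) → ℂ)}
      = relTangentCone (Φ '' Metric.ball 0 r) (Ψ '' Metric.ball 0 r) := by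
  ext u
  refine ⟨?_, fun hu => ⟨u, hu, 0, by rw [zero_smul, add_zero]⟩⟩
  rintro ⟨v, hv, c, rfl⟩
  have hX : (0 : Fin (n + 1) → ℂ) ∈ Φ '' Metric.ball 0 r :=
    ⟨0, Metric.mem_ball_self hr, apply_zero_eq_zero hr hk.ne' hΦ1 hΦord⟩
  have hY : (0 : Fin (n + 1) → ℂ) ∈ Ψ '' Metric.ball 0 r :=
    ⟨0, Metric.mem_ball_self hr, apply_zero_eq_zero hr hl.ne' hΨ1 hΨord⟩
  obtain ⟨x, y, lam, hxX, hyY, hx, hy, hlam, hlim⟩ :=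
    relTangentCone.exists_tendsto_norm_atTop hX hY hv
  exact add_smul_single_mem_relTangentCone hr hl.ne' hΨ hΨ1 hΨord hxX hyY hx hy hlam hlim c

theorem stmt11    {n : ℕ} (r : ℝ) (hr : 0 < r) (k l : ℕ) (hk : 0 < k) (hl : 0 < l)
    (Φ Ψ : ℂ → (Fin (n + 1) → ℂ))
    (hΦ : DifferentiableOn ℂ Φ (Metric.ball 0 r))
    (hΨ : DifferentiableOn ℂ Ψ (Metric.ball 0 r))
    (hΦinj : Set.InjOn Φ (Metric.ball 0 r))
    (hΨinj : Set.InjOn Ψ (Metric.ball 0 r))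
    (hΦ1 : ∀ t ∈ Metric.ball (0:ℂ) r, Φ t 0 = t ^ k)
    (hΨ1 : ∀ τ ∈ Metric.ball (0:ℂ) r, Ψ τ 0 = τ ^ l)
    (hΦord : ∀ i : Fin (n + 1), i ≠ 0 → ∀ m ≤ k, iteratedDeriv m (fun t => Φ t i) 0 = 0)
    (hΨord : ∀ i : Fin (n + 1), i ≠ 0 → ∀ m ≤ l, iteratedDeriv m (fun τ => Ψ τ i) 0 = 0)
 :
    {u : Fin (n + 1) → ℂ | ∃ v ∈ relTangentCone (Φ '' Metric.ball 0 r) (Ψ '' Metric.ball 0 r),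
        ∃ c : ℂ, u = v + c • ((Pi.single (0 : Fin (n + 1)) (1 : ℂ)) : Fin (n + 1) → ℂ)}
      = relTangentCone (Φ '' Metric.ball 0 r) (Ψ '' Metric.ball 0 r) :=
  stmt11_general r hr k l hk hl Φ Ψ hΨ hΦ1 hΨ1 hΦord hΨord
end

section
/- Containment half of the main formula: with Φ, Ψ, X, Y, εᵢ, nᵢ, vᵢ as above (parametrized curves with Φ(t) = (t^k, φ₂(t), …, φₙ(t)), Ψ(τ) = (τ^l, ψ₂(τ), …, ψₙ(τ)), ord φᵢ > k, ord ψᵢ > l, l ≤ k), each two-dimensional subspace Lin(vᵢ, e₁) is contained in C₀(X,Y). -/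
/-!
Normalise the curves as `Φ t = tᵏ • H_Φ t` and `Ψ τ = τˡ • H_Ψ τ` with `H_Φ 0 = H_Ψ 0 = e₁`.
Then `Ψ s / sˡ → e₁` produces the multiples of `e₁`. Because `(ε sᵏ)ˡ = (sˡ)ᵏ`, the difference
`Φ (sˡ) - Ψ (ε sᵏ)` is `sᵏˡ` times a function vanishing at `0`, so a nonzero limit `vε` forces
the exponent `N` in its definition to exceed `kl`. Moving the point of `Y` to
`Ψ ((ε + c sᴺ⁻ᵏˡ) sᵏ)` changes the difference by `l εˡ⁻¹ c sᴺ e₁ + o(sᴺ)`, and `c` can be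
chosen so that the limit is any `a vε + b e₁`.
-/

open Filter Topology

open Asymptotics

theorem mem_relTangentCone_of_tendsto_s13 {n : ℕ} {X Y : Set (Fin n → ℂ)} {ι : Type*}
    {L : Filter ι} [L.NeBot] [L.IsCountablyGenerated] {x y : ι → Fin n → ℂ} {lam : ι → ℂ}
    {v : Fin n → ℂ} (hxX : ∀ᶠ i in L, x i ∈ X) (hyY : ∀ᶠ i in L, y i ∈ Y)
    (hx : Tendsto x L (𝓝 0)) (hy : Tendsto y L (𝓝 0))
    (hv : Tendsto (fun i => lam i • (y i - x i)) L (𝓝 v)) : v ∈ relTangentCone X Y := by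
  obtain ⟨u, hu⟩ := L.exists_seq_tendsto
  obtain ⟨N, hN⟩ := eventually_atTop.1 (hu.eventually (hxX.and hyY))
  have huN : Tendsto (fun ν => u (ν + N)) atTop L := hu.comp (tendsto_add_atTop_nat N)
  exact ⟨fun ν => x (u (ν + N)), fun ν => y (u (ν + N)), fun ν => lam (u (ν + N)),
    fun ν => (hN _ (Nat.le_add_left _ _)).1, fun ν => (hN _ (Nat.le_add_left _ _)).2,
    hx.comp huN, hy.comp huN, hv.comp huN⟩

theorem AnalyticAt.exists_eq_pow_smul_of_iteratedDeriv_eq_zero {𝕜 E : Type*}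
    [NontriviallyNormedField 𝕜] [CharZero 𝕜] [NormedAddCommGroup E] [NormedSpace 𝕜 E]
    [CompleteSpace E] {f : 𝕜 → E} {z₀ : 𝕜} {d : ℕ} (hf : AnalyticAt 𝕜 f z₀)
    (hd : ∀ m < d, iteratedDeriv m f z₀ = 0) :
    ∃ g, AnalyticAt 𝕜 g z₀ ∧ ∀ᶠ z in 𝓝 z₀, f z = (z - z₀) ^ d • g z :=
  (natCast_le_analyticOrderAt hf).1
    ((natCast_le_analyticOrderAt_iff_iteratedDeriv_eq_zero hf).2 hd)

theorem exists_eq_pow_smul_single {n k : ℕ} {Φ : ℂ → Fin (n + 1) → ℂ} (hΦ : AnalyticAt ℂ Φ 0)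
    (hΦ0 : ∀ᶠ t in 𝓝 0, Φ t 0 = t ^ k)
    (hΦord : ∀ i : Fin (n + 1), i ≠ 0 → ∀ m ≤ k, iteratedDeriv m (fun t => Φ t i) 0 = 0) :
    ∃ H : ℂ → Fin (n + 1) → ℂ, AnalyticAt ℂ H 0 ∧ H 0 = Pi.single 0 1 ∧
      ∀ᶠ t in 𝓝 0, Φ t = t ^ k • H t := by
  have hcomp : ∀ i, ∃ h : ℂ → ℂ, AnalyticAt ℂ h 0 ∧ h 0 = (Pi.single 0 1 : Fin (n + 1) → ℂ) i ∧
      ∀ᶠ t in 𝓝 0, Φ t i = t ^ k * h t := by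
    intro i
    by_cases hi : i = 0
    · subst hi
      exact ⟨fun _ => 1, analyticAt_const, by simp, hΦ0.mono fun t ht => by simp [ht]⟩
    · obtain ⟨g, hg, hΦg⟩ := (analyticAt_pi_iff.1 hΦ i).exists_eq_pow_smul_of_iteratedDeriv_eq_zero
        (d := k + 1) fun m hm => hΦord i hi m (Nat.lt_succ_iff.1 hm)
      refine ⟨fun t => t * g t, analyticAt_id.mul hg, by simp [hi], hΦg.mono fun t ht => ?_⟩
      rw [ht, sub_zero, smul_eq_mul, pow_succ, mul_assoc]
  choose H hH hH0 hΦH using hcomp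
  exact ⟨fun t i => H i t, analyticAt_pi_iff.2 hH, funext hH0,
    (eventually_all.2 hΦH).mono fun t ht => funext ht⟩

theorem tendsto_pow_nhdsNE_zero_s13 {M : Type*} [MonoidWithZero M] [NoZeroDivisors M]
    [TopologicalSpace M] [ContinuousMul M] {P : ℕ} (hP : 0 < P) :
    Tendsto (fun s : M => s ^ P) (𝓝[≠] 0) (𝓝[≠] 0) :=
  tendsto_nhdsWithin_iff.2
    ⟨((continuous_pow P).tendsto' 0 0 (zero_pow hP.ne')).mono_left nhdsWithin_le_nhds,
      eventually_mem_nhdsWithin.mono fun _ hs => pow_ne_zero _ hs⟩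

theorem tendsto_inv_pow_mul_add_pow_sub_pow (ε c : ℂ) (l : ℕ) {P : ℕ} (hP : 0 < P) :
    Tendsto (fun s : ℂ => (s ^ P)⁻¹ * ((ε + c * s ^ P) ^ l - ε ^ l)) (𝓝[≠] 0)
      (𝓝 (l * ε ^ (l - 1) * c)) := by
  have hder : HasDerivAt (fun u : ℂ => (ε + c * u) ^ l) (l * ε ^ (l - 1) * c) 0 := by
    simpa using (((hasDerivAt_id (0 : ℂ)).const_mul c).const_add ε).fun_pow l
  refine (hasDerivAt_iff_tendsto_slope.1 hder).comp (tendsto_pow_nhdsNE_zero_s13 hP) |>.congr ?_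
  intro s
  simp [slope_def_field, div_eq_inv_mul]

theorem tendsto_inv_pow_smul_sub_of_eq_pow_smul {E : Type*} [NormedAddCommGroup E]
    [NormedSpace ℂ E] {Ψ H : ℂ → E} {H' : ℂ →L[ℂ] E} {k l P : ℕ} (hk : 0 < k) (hP : 0 < P)
    {ε : ℂ} (hε : ε ^ l = 1) (c : ℂ) (hΨ : ∀ᶠ z in 𝓝 0, Ψ z = z ^ l • H z)
    (hH : HasStrictFDerivAt H H' 0) :
    Tendsto (fun s : ℂ => (s ^ (k * l + P))⁻¹ • (Ψ ((ε + c * s ^ P) * s ^ k) - Ψ (ε * s ^ k)))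
      (𝓝[≠] 0) (𝓝 ((l * ε ^ (l - 1) * c) • H 0)) := by
  set σ : ℂ → ℂ := fun s => ε * s ^ k
  set τ : ℂ → ℂ := fun s => (ε + c * s ^ P) * s ^ k
  have hσ : Tendsto σ (𝓝[≠] 0) (𝓝 0) :=
    ((continuous_const.mul (continuous_pow k)).tendsto' 0 0 (by simp [hk.ne'])).mono_left
      nhdsWithin_le_nhds
  have hτ : Tendsto τ (𝓝[≠] 0) (𝓝 0) :=
    (((continuous_const.add (continuous_const.mul (continuous_pow P))).mul
      (continuous_pow k)).tendsto' 0 0 (by simp [hk.ne'])).mono_left nhdsWithin_le_nhds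
  have hsub : (fun s => τ s - σ s) =o[𝓝[≠] 0] fun s => s ^ P := by
    have : (fun s : ℂ => c * s ^ (P + k)) =o[𝓝 0] fun s => s ^ P :=
      (isLittleO_pow_pow (by omega)).const_mul_left c
    refine (this.mono nhdsWithin_le_nhds).congr_left fun s => ?_
    simp only [τ, σ]; ring
  have hHsub : (fun s => H (τ s) - H (σ s)) =o[𝓝[≠] 0] fun s => s ^ P :=
    (hH.isBigO_sub.comp_tendsto (hτ.prodMk_nhds hσ)).trans_isLittleO hsub
  have hlim := ((tendsto_inv_pow_mul_add_pow_sub_pow ε c l hP).smul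
    (hH.continuousAt.tendsto.comp hτ)).add hHsub.tendsto_inv_smul_nhds_zero
  rw [add_zero] at hlim
  refine hlim.congr' ?_
  filter_upwards [self_mem_nhdsWithin, hσ.eventually hΨ, hτ.eventually hΨ] with s hs hσs hτs
  simp only [Function.comp_apply, hσs, hτs, τ, σ]
  rw [mul_pow, mul_pow, ← pow_mul, hε, pow_add]
  have hs : s ≠ 0 := hs
  match_scalars
  · field_simp
    ring
  · field_simp

theorem smul_mem_relTangentCone_image {m l : ℕ} {U V : Set ℂ} {Φ Ψ H : ℂ → Fin m → ℂ}
    (hU : 0 ∈ U) (hV : V ∈ 𝓝 0) (hΦ0 : Φ 0 = 0) (hΨ : ContinuousAt Ψ 0) (hΨ0 : Ψ 0 = 0)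
    (hΨH : ∀ᶠ z in 𝓝 0, Ψ z = z ^ l • H z) (hH : ContinuousAt H 0) (b : ℂ) :
    b • H 0 ∈ relTangentCone (Φ '' U) (Ψ '' V) := by
  refine mem_relTangentCone_of_tendsto_s13 (L := 𝓝[≠] 0) (x := fun _ => Φ 0) (y := Ψ)
    (lam := fun s => b * (s ^ l)⁻¹) (.of_forall fun _ => Set.mem_image_of_mem Φ hU)
    (mem_of_superset (mem_nhdsWithin_of_mem_nhds hV) fun _ hs => Set.mem_image_of_mem Ψ hs)
    (by simp [hΦ0]) (hΨ0 ▸ hΨ.tendsto.mono_left nhdsWithin_le_nhds)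
    ((hH.tendsto.mono_left nhdsWithin_le_nhds).const_smul b |>.congr' ?_)
  filter_upwards [self_mem_nhdsWithin, mem_nhdsWithin_of_mem_nhds hΨH] with s hs hΨs
  have hs : s ≠ 0 := hs
  rw [hΦ0, sub_zero, hΨs, smul_smul, mul_assoc, inv_mul_cancel₀ (pow_ne_zero l hs), mul_one]

theorem mul_lt_of_tendsto_inv_pow_smul_sub {E : Type*} [NormedAddCommGroup E] [NormedSpace ℂ E]
    {Φ Ψ HΦ HΨ : ℂ → E} {k l N : ℕ} (hk : 0 < k) (hl : 0 < l) {ε : ℂ} (hε : ε ^ l = 1)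
    (hΦ : ∀ᶠ z in 𝓝 0, Φ z = z ^ k • HΦ z) (hΨ : ∀ᶠ z in 𝓝 0, Ψ z = z ^ l • HΨ z)
    (hHΦ : ContinuousAt HΦ 0) (hHΨ : ContinuousAt HΨ 0) (hH0 : HΦ 0 = HΨ 0) {v : E}
    (hv : Tendsto (fun s : ℂ => (s ^ N)⁻¹ • (Φ (s ^ l) - Ψ (ε * s ^ k))) (𝓝[≠] 0) (𝓝 v))
    (hv0 : v ≠ 0) : k * l < N := by
  by_contra! hN
  have hσ : Tendsto (fun s : ℂ => ε * s ^ k) (𝓝 0) (𝓝 0) :=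
    (continuous_const.mul (continuous_pow k)).tendsto' 0 0 (by simp [hk.ne'])
  have hρ : Tendsto (fun s : ℂ => s ^ l) (𝓝 0) (𝓝 0) :=
    (continuous_pow l).tendsto' 0 0 (by simp [hl.ne'])
  have hdiff : Tendsto (fun s : ℂ => HΦ (s ^ l) - HΨ (ε * s ^ k)) (𝓝 0) (𝓝 0) := by
    simpa [hH0] using (hHΦ.tendsto.comp hρ).sub (hHΨ.tendsto.comp hσ)
  have hzero : Tendsto (fun s : ℂ => s ^ (k * l - N) • (HΦ (s ^ l) - HΨ (ε * s ^ k)))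
      (𝓝[≠] 0) (𝓝 0) := by
    simpa using (((continuous_pow (k * l - N)).tendsto 0).smul hdiff).mono_left nhdsWithin_le_nhds
  refine hv0 (tendsto_nhds_unique hv (hzero.congr' ?_))
  filter_upwards [self_mem_nhdsWithin, mem_nhdsWithin_of_mem_nhds (hρ.eventually hΦ),
    mem_nhdsWithin_of_mem_nhds (hσ.eventually hΨ)] with s hs hΦs hΨs
  have hs : s ≠ 0 := hs
  rw [hΦs, hΨs, mul_pow, hε, one_mul, ← pow_mul, ← pow_mul, mul_comm l k, ← smul_sub,
    smul_smul, ← Nat.sub_add_cancel hN, pow_add, Nat.add_sub_cancel]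
  field_simp

theorem add_smul_mem_relTangentCone_image {m k l N : ℕ} {U V : Set ℂ}
    {Φ Ψ H : ℂ → Fin m → ℂ} {H' : ℂ →L[ℂ] Fin m → ℂ} (hU : U ∈ 𝓝 0) (hV : V ∈ 𝓝 0)
    (hk : 0 < k) (hl : 0 < l) (hΦ : ContinuousAt Φ 0) (hΦ0 : Φ 0 = 0) (hΨ : ContinuousAt Ψ 0)
    (hΨ0 : Ψ 0 = 0) (hΨH : ∀ᶠ z in 𝓝 0, Ψ z = z ^ l • H z) (hH : HasStrictFDerivAt H H' 0)
    {ε : ℂ} (hε : ε ^ l = 1) {v : Fin m → ℂ}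
    (hv : Tendsto (fun s : ℂ => (s ^ N)⁻¹ • (Φ (s ^ l) - Ψ (ε * s ^ k))) (𝓝[≠] 0) (𝓝 v))
    (hN : k * l < N) {a : ℂ} (ha : a ≠ 0) (b : ℂ) :
    a • v + b • H 0 ∈ relTangentCone (Φ '' U) (Ψ '' V) := by
  obtain ⟨P, hP, rfl⟩ : ∃ P, 0 < P ∧ N = k * l + P := ⟨N - k * l, by omega, by omega⟩
  have hε0 : ε ≠ 0 := by rintro rfl; simp [hl.ne'] at hε
  -- `c` is chosen so that moving `y` from `Ψ (ε sᵏ)` to `Ψ ((ε + c sᴾ) sᵏ)` contributes `b • H 0`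
  set c : ℂ := -b / (a * (l * ε ^ (l - 1)))
  have hc : -a * (l * ε ^ (l - 1) * c) = b := by
    have hl' : (l : ℂ) ≠ 0 := by exact_mod_cast hl.ne'
    simp only [c]
    field_simp
  have hρ : Tendsto (fun s : ℂ => s ^ l) (𝓝[≠] 0) (𝓝 0) :=
    ((continuous_pow l).tendsto' 0 0 (by simp [hl.ne'])).mono_left nhdsWithin_le_nhds
  have hτ : Tendsto (fun s : ℂ => (ε + c * s ^ P) * s ^ k) (𝓝[≠] 0) (𝓝 0) :=
    (((continuous_const.add (continuous_const.mul (continuous_pow P))).mul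
      (continuous_pow k)).tendsto' 0 0 (by simp [hk.ne'])).mono_left nhdsWithin_le_nhds
  have hlim := ((tendsto_inv_pow_smul_sub_of_eq_pow_smul hk hP hε c hΨH hH).const_smul (-a)).add
    (hv.const_smul a)
  rw [smul_smul, hc] at hlim
  rw [add_comm]
  refine mem_relTangentCone_of_tendsto_s13 (hρ.eventually hU |>.mono fun _ hs => ⟨_, hs, rfl⟩)
    (hτ.eventually hV |>.mono fun _ hs => ⟨_, hs, rfl⟩) (hΦ0 ▸ hΦ.tendsto.comp hρ)
    (hΨ0 ▸ hΨ.tendsto.comp hτ) (hlim.congr fun s => ?_)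
    (lam := fun s => -a * (s ^ (k * l + P))⁻¹)
  module

theorem stmt13_general    {n : ℕ} (r : ℝ) (hr : 0 < r) (k l : ℕ) (hk : 0 < k) (hl : 0 < l)
    (Φ Ψ : ℂ → (Fin (n + 1) → ℂ))
    (hΦ : DifferentiableOn ℂ Φ (Metric.ball 0 r))
    (hΨ : DifferentiableOn ℂ Ψ (Metric.ball 0 r))
    (hΦ1 : ∀ t ∈ Metric.ball (0:ℂ) r, Φ t 0 = t ^ k)
    (hΨ1 : ∀ τ ∈ Metric.ball (0:ℂ) r, Ψ τ 0 = τ ^ l)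
    (hΦord : ∀ i : Fin (n + 1), i ≠ 0 → ∀ m ≤ k, iteratedDeriv m (fun t => Φ t i) 0 = 0)
    (hΨord : ∀ i : Fin (n + 1), i ≠ 0 → ∀ m ≤ l, iteratedDeriv m (fun τ => Ψ τ i) 0 = 0)
    (ε : ℂ) (hε : ε ^ l = 1) (vε : Fin (n + 1) → ℂ)
    (hvε : Tendsto (fun t : ℂ => (t ^ holOrder (fun s : ℂ => Φ (s ^ l) - Ψ (ε * s ^ k)))⁻¹ •
        (Φ (t ^ l) - Ψ (ε * t ^ k))) (𝓝[≠] 0) (𝓝 vε)) :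
    (Submodule.span ℂ {vε, (Pi.single (0 : Fin (n + 1)) (1 : ℂ))} : Set (Fin (n + 1) → ℂ))
      ⊆ relTangentCone (Φ '' Metric.ball 0 r) (Ψ '' Metric.ball 0 r) := by
  have hball : Metric.ball (0 : ℂ) r ∈ 𝓝 0 := Metric.ball_mem_nhds 0 hr
  have hΦa := hΦ.analyticAt hball
  have hΨa := hΨ.analyticAt hball
  obtain ⟨HΦ, hHΦ, hHΦ0, hΦH⟩ := exists_eq_pow_smul_single hΦa (eventually_of_mem hball hΦ1) hΦord
  obtain ⟨HΨ, hHΨ, hHΨ0, hΨH⟩ := exists_eq_pow_smul_single hΨa (eventually_of_mem hball hΨ1) hΨord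
  have hΦ0 : Φ 0 = 0 := by simpa [zero_pow hk.ne'] using hΦH.self_of_nhds
  have hΨ0 : Ψ 0 = 0 := by simpa [zero_pow hl.ne'] using hΨH.self_of_nhds
  intro w hw
  obtain ⟨a, b, rfl⟩ := Submodule.mem_span_pair.1 hw
  rw [← hHΨ0]
  by_cases hav : a = 0 ∨ vε = 0
  · have : a • vε = 0 := by rcases hav with h | h <;> simp [h]
    rw [this, zero_add]
    exact smul_mem_relTangentCone_image (Metric.mem_ball_self hr) hball hΦ0 hΨa.continuousAt hΨ0
      hΨH hHΨ.continuousAt b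
  · obtain ⟨ha, hv⟩ := not_or.1 hav
    have hN := mul_lt_of_tendsto_inv_pow_smul_sub hk hl hε hΦH hΨH hHΦ.continuousAt
      hHΨ.continuousAt (hHΦ0.trans hHΨ0.symm) hvε hv
    exact add_smul_mem_relTangentCone_image hball hball hk hl hΦa.continuousAt hΦ0
      hΨa.continuousAt hΨ0 hΨH hHΨ.hasStrictFDerivAt hε hvε hN ha b

theorem stmt13    {n : ℕ} (r : ℝ) (hr : 0 < r) (k l : ℕ) (hk : 0 < k) (hl : 0 < l)
    (Φ Ψ : ℂ → (Fin (n + 1) → ℂ))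
    (hΦ : DifferentiableOn ℂ Φ (Metric.ball 0 r))
    (hΨ : DifferentiableOn ℂ Ψ (Metric.ball 0 r))
    (hΦinj : Set.InjOn Φ (Metric.ball 0 r))
    (hΨinj : Set.InjOn Ψ (Metric.ball 0 r))
    (hΦ1 : ∀ t ∈ Metric.ball (0:ℂ) r, Φ t 0 = t ^ k)
    (hΨ1 : ∀ τ ∈ Metric.ball (0:ℂ) r, Ψ τ 0 = τ ^ l)
    (hΦord : ∀ i : Fin (n + 1), i ≠ 0 → ∀ m ≤ k, iteratedDeriv m (fun t => Φ t i) 0 = 0)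
    (hΨord : ∀ i : Fin (n + 1), i ≠ 0 → ∀ m ≤ l, iteratedDeriv m (fun τ => Ψ τ i) 0 = 0)
    (hlk : l ≤ k)
    (ε : ℂ) (hε : ε ^ l = 1) (vε : Fin (n + 1) → ℂ)
    (hvε : Tendsto (fun t : ℂ => (t ^ holOrder (fun s : ℂ => Φ (s ^ l) - Ψ (ε * s ^ k)))⁻¹ •
        (Φ (t ^ l) - Ψ (ε * t ^ k))) (𝓝[≠] 0) (𝓝 vε)) :
    (Submodule.span ℂ {vε, (Pi.single (0 : Fin (n + 1)) (1 : ℂ))} : Set (Fin (n + 1) → ℂ))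
      ⊆ relTangentCone (Φ '' Metric.ball 0 r) (Ψ '' Metric.ball 0 r) :=
  stmt13_general r hr k l hk hl Φ Ψ hΦ hΨ hΦ1 hΨ1 hΦord hΨord ε hε vε hvε
end

section
/- Transversal case: if Φ(t) and Ψ(τ) are injective holomorphic maps on K(r) into ℂⁿ with Φ(0) = Ψ(0) = 0, X = Φ(K(r)), Y = Ψ(K(r)), and the limits v₁ = lim Φ(t)/t^{ord Φ}, v₂ = lim Ψ(τ)/τ^{ord Ψ} are linearly independent over ℂ, then every vector of the form a·v₁ + b·v₂ (a, b ∈ ℂ) lies in C₀(X,Y); i.e., ℂ·v₁ + ℂ·v₂ ⊆ C₀(X,Y). -/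
open Filter Topology

/-!
If `Φ(t) ~ t^p v₁` and `Ψ(τ) ~ τ^q v₂` with `p, q ≥ 1`, choose `tᵥ, τᵥ → 0` with
`(ν+1) tᵥ^p = -a` and `(ν+1) τᵥ^q = b` (complex roots exist). Then
`(ν+1) (Ψ(τᵥ) - Φ(tᵥ)) → b v₂ + a v₁`. The orders are positive since `v₁, v₂ ≠ 0` while
`Φ, Ψ` are continuous and vanish at `0`.
-/

theorem mem_relTangentCone_of_eventually {n : ℕ} {X Y : Set (Fin n → ℂ)} {v : Fin n → ℂ}
    {x y : ℕ → (Fin n → ℂ)} {lam : ℕ → ℂ} (hxX : ∀ᶠ ν in atTop, x ν ∈ X)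
    (hyY : ∀ᶠ ν in atTop, y ν ∈ Y) (hx : Tendsto x atTop (𝓝 0)) (hy : Tendsto y atTop (𝓝 0))
    (hv : Tendsto (fun ν => lam ν • (y ν - x ν)) atTop (𝓝 v)) :
    v ∈ relTangentCone X Y := by
  obtain ⟨N, hN⟩ := eventually_atTop.1 (hxX.and hyY)
  exact ⟨fun ν => x (ν + N), fun ν => y (ν + N), fun ν => lam (ν + N),
    fun ν => (hN _ (Nat.le_add_left N ν)).1, fun ν => (hN _ (Nat.le_add_left N ν)).2,
    (tendsto_add_atTop_iff_nat N).2 hx, (tendsto_add_atTop_iff_nat N).2 hy,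
    (tendsto_add_atTop_iff_nat N).2 hv⟩

theorem exists_tendsto_zero_natSucc_mul_pow_eq {p : ℕ} (hp : p ≠ 0) (c : ℂ) :
    ∃ s : ℕ → ℂ, Tendsto s atTop (𝓝 0) ∧ ∀ ν : ℕ, ((ν : ℂ) + 1) * s ν ^ p = c := by
  refine ⟨fun ν => (c / ((ν : ℂ) + 1)) ^ (p⁻¹ : ℂ), ?_, fun ν => ?_⟩
  · have hw : Tendsto (fun ν : ℕ => c / ((ν : ℂ) + 1)) atTop (𝓝 0) := by
      simpa using (tendsto_add_atTop_iff_nat 1).2 (tendsto_const_div_atTop_nhds_zero_nat c)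
    have hroot : ContinuousAt (fun z : ℂ => z ^ (p⁻¹ : ℂ)) 0 :=
      Complex.continuousAt_cpow_const_of_re_pos (Or.inl le_rfl) (by simp [Nat.pos_of_ne_zero hp])
    have h := hroot.tendsto.comp hw
    rwa [Complex.zero_cpow (inv_ne_zero (Nat.cast_ne_zero.2 hp))] at h
  · rw [Complex.cpow_nat_inv_pow _ hp]
    field_simp

section

variable {E : Type*} [NormedAddCommGroup E] [NormedSpace ℂ E]

theorem tendsto_smul_comp_of_mul_pow_eq {f : ℂ → E} {p : ℕ} {v : E} (hp : p ≠ 0) (hf0 : f 0 = 0)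
    (hv : Tendsto (fun t : ℂ => (t ^ p)⁻¹ • f t) (𝓝[≠] 0) (𝓝 v))
    {ι : Type*} {l : Filter ι} {s lam : ι → ℂ} {c : ℂ} (hs : Tendsto s l (𝓝 0))
    (hlam : ∀ i, lam i ≠ 0) (hsc : ∀ i, lam i * s i ^ p = c) :
    Tendsto (fun i => lam i • f (s i)) l (𝓝 (c • v)) := by
  rcases eq_or_ne c 0 with rfl | hc
  · have hs0 : ∀ i, s i = 0 := fun i =>
      pow_eq_zero_iff hp |>.1 ((mul_eq_zero.1 (hsc i)).resolve_left (hlam i))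
    simpa [hs0, hf0] using tendsto_const_nhds
  · have hs0 : ∀ i, s i ≠ 0 := fun i h => hc (by simp [← hsc i, h, hp])
    have hs' : Tendsto s l (𝓝[≠] 0) :=
      tendsto_nhdsWithin_iff.2 ⟨hs, Eventually.of_forall hs0⟩
    refine ((hv.comp hs').const_smul c).congr fun i => ?_
    rw [Function.comp_apply, smul_smul, ← hsc i, mul_assoc, mul_inv_cancel₀ (pow_ne_zero p (hs0 i)),
      mul_one]

theorem ne_zero_of_tendsto_inv_pow_smul {f : ℂ → E} {p : ℕ} {v : E} (hf : ContinuousAt f 0)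
    (hf0 : f 0 = 0) (hv0 : v ≠ 0)
    (hv : Tendsto (fun t : ℂ => (t ^ p)⁻¹ • f t) (𝓝[≠] 0) (𝓝 v)) : p ≠ 0 := by
  rintro rfl
  simp only [pow_zero, inv_one, one_smul] at hv
  exact hv0 (tendsto_nhds_unique hv (hf0 ▸ hf.tendsto.mono_left nhdsWithin_le_nhds))

end

theorem stmt15_general {n : ℕ} (r : ℝ) (hr : 0 < r) (Φ Ψ : ℂ → (Fin n → ℂ))
    (hΦ : DifferentiableOn ℂ Φ (Metric.ball 0 r))
    (hΨ : DifferentiableOn ℂ Ψ (Metric.ball 0 r))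
    (hΦ0 : Φ 0 = 0) (hΨ0 : Ψ 0 = 0)
    (v₁ v₂ : Fin n → ℂ)
    (hv₁ : Tendsto (fun t : ℂ => (t ^ holOrder Φ)⁻¹ • Φ t) (𝓝[≠] 0) (𝓝 v₁))
    (hv₂ : Tendsto (fun τ : ℂ => (τ ^ holOrder Ψ)⁻¹ • Ψ τ) (𝓝[≠] 0) (𝓝 v₂))
    (hind : LinearIndependent ℂ ![v₁, v₂]) :
    ∀ a b : ℂ, a • v₁ + b • v₂ ∈
      relTangentCone (Φ '' Metric.ball 0 r) (Ψ '' Metric.ball 0 r) := by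
  intro a b
  have hball := Metric.ball_mem_nhds (0 : ℂ) hr
  have hcΦ := hΦ.continuousOn.continuousAt hball
  have hcΨ := hΨ.continuousOn.continuousAt hball
  have hp := ne_zero_of_tendsto_inv_pow_smul hcΦ hΦ0 (by simpa using hind.ne_zero 0) hv₁
  have hq := ne_zero_of_tendsto_inv_pow_smul hcΨ hΨ0 (by simpa using hind.ne_zero 1) hv₂
  obtain ⟨t, ht, htp⟩ := exists_tendsto_zero_natSucc_mul_pow_eq hp (-a)
  obtain ⟨τ, hτ, hτq⟩ := exists_tendsto_zero_natSucc_mul_pow_eq hq b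
  have hsucc : ∀ ν : ℕ, (ν : ℂ) + 1 ≠ 0 := Nat.cast_add_one_ne_zero
  have hlim := (tendsto_smul_comp_of_mul_pow_eq hq hΨ0 hv₂ hτ hsucc hτq).sub
    (tendsto_smul_comp_of_mul_pow_eq hp hΦ0 hv₁ ht hsucc htp)
  refine mem_relTangentCone_of_eventually (lam := fun ν => (ν : ℂ) + 1)
    ((ht.eventually hball).mono fun ν h => Set.mem_image_of_mem Φ h)
    ((hτ.eventually hball).mono fun ν h => Set.mem_image_of_mem Ψ h)
    (hΦ0 ▸ hcΦ.tendsto.comp ht) (hΨ0 ▸ hcΨ.tendsto.comp hτ) ?_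
  rw [show a • v₁ + b • v₂ = b • v₂ - (-a) • v₁ by module]
  simpa only [smul_sub] using hlim

theorem stmt15 {n : ℕ} (r : ℝ) (hr : 0 < r) (Φ Ψ : ℂ → (Fin n → ℂ))
    (hΦ : DifferentiableOn ℂ Φ (Metric.ball 0 r))
    (hΨ : DifferentiableOn ℂ Ψ (Metric.ball 0 r))
    (hΦinj : Set.InjOn Φ (Metric.ball 0 r))
    (hΨinj : Set.InjOn Ψ (Metric.ball 0 r))
    (hΦ0 : Φ 0 = 0) (hΨ0 : Ψ 0 = 0)
    (v₁ v₂ : Fin n → ℂ)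
    (hv₁ : Tendsto (fun t : ℂ => (t ^ holOrder Φ)⁻¹ • Φ t) (𝓝[≠] 0) (𝓝 v₁))
    (hv₂ : Tendsto (fun τ : ℂ => (τ ^ holOrder Ψ)⁻¹ • Ψ τ) (𝓝[≠] 0) (𝓝 v₂))
    (hind : LinearIndependent ℂ ![v₁, v₂]) :
    ∀ a b : ℂ, a • v₁ + b • v₂ ∈
      relTangentCone (Φ '' Metric.ball 0 r) (Ψ '' Metric.ball 0 r) :=
  stmt15_general r hr Φ Ψ hΦ hΨ hΦ0 hΨ0 v₁ v₂ hv₁ hv₂ hind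
end

section
/- Single-curve (Whitney cone C₅) case for a smooth parametrized curve: if Φ(t) = (t, φ₂(t), …, φₙ(t)) is holomorphic on K(r) with ord φᵢ ≥ 2 for all i, and X = Φ(K(r)), then C₀(X, X) = ℂ·e₁, the tangent line of X at 0. -/
/-!
A curve with strict derivative `w` at `0` satisfies `Φ t - Φ s = (t - s) • w + o(t - s)` as
`s, t → 0`. Since `Φ t 0 = t`, the first coordinate of a secant `λ (Φ t - Φ s)` is `λ (t - s)`; if
the secants converge to `v`, then `λ (t - s) → v 0`, the error term is `o(λ (t - s)) → 0`, and so
`v = v 0 • w`. The order condition on the other components makes `w = e₁`. Conversely `c • e₁` is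
the limit of the secants `(c / τ) • (Φ τ - Φ 0)` as `τ → 0`.
-/

open Filter Topology

open Asymptotics

theorem HasStrictDerivAt.tendsto_smul_sub {𝕜 E ι : Type*} [NontriviallyNormedField 𝕜]
    [NormedAddCommGroup E] [NormedSpace 𝕜 E] {f : 𝕜 → E} {f' : E} {a : 𝕜}
    (hf : HasStrictDerivAt f f' a) {l : Filter ι} {s t lam : ι → 𝕜} {c : 𝕜}
    (hs : Tendsto s l (𝓝 a)) (ht : Tendsto t l (𝓝 a))
    (hc : Tendsto (fun i => lam i * (t i - s i)) l (𝓝 c)) :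
    Tendsto (fun i => lam i • (f (t i) - f (s i))) l (𝓝 (c • f')) := by
  have hrem : (fun i => f (t i) - f (s i) - (t i - s i) • f') =o[l] fun i => t i - s i := by
    simpa [Function.comp_def] using
      hf.hasStrictFDerivAt.isLittleO.comp_tendsto (ht.prodMk_nhds hs)
  have hsmall : Tendsto (fun i => lam i • (f (t i) - f (s i) - (t i - s i) • f')) l (𝓝 0) := by
    refine isLittleO_one_iff 𝕜 |>.mp ?_
    refine ((isBigO_refl lam l).smul_isLittleO hrem).trans_isBigO ?_
    simpa [smul_eq_mul] using hc.isBigO_one 𝕜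
  have hmain := hsmall.add (hc.smul_const f')
  rw [zero_add] at hmain
  refine hmain.congr fun i => ?_
  simp only [smul_sub, mul_smul]
  abel

theorem exists_seq_mem_diff_singleton_tendsto {X : Type*} [TopologicalSpace X]
    [FrechetUrysohnSpace X] {a : X} [(𝓝[≠] a).NeBot] {U : Set X} (hU : U ∈ 𝓝 a) :
    ∃ τ : ℕ → X, (∀ ν, τ ν ∈ U \ {a}) ∧ Tendsto τ atTop (𝓝 a) := by
  refine mem_closure_iff_seq_limit.mp (mem_closure_iff_nhdsWithin_neBot.mpr ?_)
  rwa [Set.sdiff_eq, nhdsWithin_inter_of_mem (mem_nhdsWithin_of_mem_nhds hU)]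

section Curve

variable {n : ℕ} {r : ℝ} {Φ : ℂ → (Fin (n + 1) → ℂ)}

theorem curve_apply_zero (hr : 0 < r) (hΦ1 : ∀ t ∈ Metric.ball (0:ℂ) r, Φ t 0 = t)
    (hΦord : ∀ i : Fin (n + 1), i ≠ 0 → ∀ m ≤ 1, iteratedDeriv m (fun t => Φ t i) 0 = 0) :
    Φ 0 = 0 := by
  funext i
  by_cases hi : i = 0
  · subst hi
    exact hΦ1 0 (Metric.mem_ball_self hr)
  · simpa using hΦord i hi 0 zero_le_one

theorem curve_hasStrictDerivAt_zero (hr : 0 < r) (hΦ : DifferentiableOn ℂ Φ (Metric.ball 0 r))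
    (hΦ1 : ∀ t ∈ Metric.ball (0:ℂ) r, Φ t 0 = t)
    (hΦord : ∀ i : Fin (n + 1), i ≠ 0 → ∀ m ≤ 1, iteratedDeriv m (fun t => Φ t i) 0 = 0) :
    HasStrictDerivAt Φ (Pi.single 0 1) 0 := by
  have hball : Metric.ball (0:ℂ) r ∈ 𝓝 0 := Metric.ball_mem_nhds 0 hr
  have hstrict := (hΦ.analyticAt hball).hasStrictDerivAt
  suffices hd : deriv Φ 0 = Pi.single 0 1 by rwa [hd] at hstrict
  funext i
  rw [← (hasDerivAt_pi.mp hstrict.hasDerivAt i).deriv]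
  by_cases hi : i = 0
  · subst hi
    have hid : (fun t => Φ t 0) =ᶠ[𝓝 0] id := eventually_of_mem hball hΦ1
    rw [hid.deriv_eq, deriv_id, Pi.single_eq_same]
  · rw [Pi.single_eq_of_ne hi, ← iteratedDeriv_one, hΦord i hi 1 le_rfl]

end Curve

theorem stmt17 {n : ℕ} (r : ℝ) (hr : 0 < r) (Φ : ℂ → (Fin (n + 1) → ℂ))
    (hΦ : DifferentiableOn ℂ Φ (Metric.ball 0 r))
    (hΦ1 : ∀ t ∈ Metric.ball (0:ℂ) r, Φ t 0 = t)
    (hΦord : ∀ i : Fin (n + 1), i ≠ 0 → ∀ m ≤ 1, iteratedDeriv m (fun t => Φ t i) 0 = 0) :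
    relTangentCone (Φ '' Metric.ball 0 r) (Φ '' Metric.ball 0 r)
      = Set.range (fun c : ℂ => c • ((Pi.single (0 : Fin (n + 1)) (1 : ℂ)) : Fin (n + 1) → ℂ)) := by
  have hΦ0 := curve_apply_zero hr hΦ1 hΦord
  have hderiv := curve_hasStrictDerivAt_zero hr hΦ hΦ1 hΦord
  apply Set.Subset.antisymm
  · rintro v ⟨x, y, lam, hx, hy, hx0, hy0, hlim⟩
    choose s hs hxs using hx
    choose t ht hyt using hy
    obtain rfl : (fun ν => Φ (s ν)) = x := funext hxs
    obtain rfl : (fun ν => Φ (t ν)) = y := funext hyt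
    have hcoord : ∀ {u : ℕ → ℂ}, (∀ ν, u ν ∈ Metric.ball 0 r) →
        Tendsto (fun ν => Φ (u ν)) atTop (𝓝 0) → Tendsto u atTop (𝓝 0) := fun hu hΦu => by
      simpa [hΦ1 _ (hu _)] using tendsto_pi_nhds.mp hΦu 0
    have hc : Tendsto (fun ν => lam ν * (t ν - s ν)) atTop (𝓝 (v 0)) := by
      simpa [mul_sub, hΦ1 _ (hs _), hΦ1 _ (ht _)] using tendsto_pi_nhds.mp hlim 0
    exact ⟨v 0, tendsto_nhds_unique
      (hderiv.tendsto_smul_sub (hcoord hs hx0) (hcoord ht hy0) hc) hlim⟩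
  · rintro v ⟨c, rfl⟩
    obtain ⟨τ, hτ, hτ0⟩ := exists_seq_mem_diff_singleton_tendsto (Metric.ball_mem_nhds (0:ℂ) hr)
    refine ⟨fun _ => Φ 0, fun ν => Φ (τ ν), fun ν => c / τ ν,
      fun _ => ⟨0, Metric.mem_ball_self hr, rfl⟩, fun ν => ⟨τ ν, (hτ ν).1, rfl⟩, ?_, ?_, ?_⟩
    · simp [hΦ0]
    · simpa [Function.comp_def, hΦ0] using hderiv.hasDerivAt.continuousAt.tendsto.comp hτ0
    · refine hderiv.tendsto_smul_sub tendsto_const_nhds hτ0 (tendsto_const_nhds.congr fun ν => ?_)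
      rw [sub_zero, div_mul_cancel₀ _ (hτ ν).2]
end

section
/- Root-of-unity normalization: let Φ, Ψ be as in the main theorem (Φ(t) = (t^k, φ₂(t), …), Ψ(τ) = (τ^l, ψ₂(τ), …), ord φᵢ > k, ord ψᵢ > l, l ≤ k). For any ε with ε^l = 1 and η with η^k = 1, let v_{ε,η} = lim_{t→0}(Φ(η t^l) − Ψ(ε t^k))/t^{ord(Φ(η t^l) − Ψ(ε t^k))}. Then there exists an l-th root of unity εᵢ such that ℂ·v_{ε,η} = ℂ·vᵢ, where vᵢ = lim_{t→0}(Φ(t^l) − Ψ(εᵢ t^k))/t^{nᵢ}. -/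
open Filter Topology

/-! Choose `δ` with `δ ^ l = η` and put `ε' = ε / δ ^ k`, again an `l`-th root of unity. Then
`Φ (η s ^ l) - Ψ (ε s ^ k) = f (δ s)` for `f u = Φ (u ^ l) - Ψ (ε' u ^ k)`, and a linear change of
the parameter preserves the vanishing order and rescales the normalized limit by the nonzero
factor `δ ^ (-ord f)`, so both limits span the same line. -/

section

variable {𝕜 E : Type*} [NontriviallyNormedField 𝕜] [NormedAddCommGroup E] [NormedSpace 𝕜 E]

theorem iteratedDeriv_comp_mul_left (m : ℕ) (f : 𝕜 → E) (c x : 𝕜) :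
    iteratedDeriv m (fun y => f (c * y)) x = c ^ m • iteratedDeriv m f (c * x) := by
  induction m generalizing x with
  | zero => simp
  | succ m ih =>
    rw [iteratedDeriv_succ, funext ih, deriv_fun_const_smul_field,
      deriv_comp_mul_left c (iteratedDeriv m f), iteratedDeriv_succ, smul_smul, pow_succ]

end

section

variable {E : Type*} [NormedAddCommGroup E] [NormedSpace ℂ E]

theorem holOrder_comp_mul_left (f : ℂ → E) {c : ℂ} (hc : c ≠ 0) :
    holOrder (fun s => f (c * s)) = holOrder f := by
  simp only [holOrder, iteratedDeriv_comp_mul_left, mul_zero, ne_eq, smul_eq_zero,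
    pow_eq_zero_iff', hc, false_and, false_or]

theorem tendsto_inv_pow_holOrder_smul_of_comp_mul_left {f : ℂ → E} {c : ℂ} (hc : c ≠ 0) {v : E}
    (h : Tendsto (fun t => (t ^ holOrder (fun s => f (c * s)))⁻¹ • f (c * t)) (𝓝[≠] 0) (𝓝 v)) :
    Tendsto (fun t => (t ^ holOrder f)⁻¹ • f t) (𝓝[≠] 0) (𝓝 ((c ^ holOrder f)⁻¹ • v)) := by
  rw [holOrder_comp_mul_left f hc] at h
  have hmap : Tendsto (c⁻¹ * ·) (𝓝[≠] (0 : ℂ)) (𝓝[≠] 0) := by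
    rw [Tendsto]
    simpa using ((Homeomorph.mulLeft₀ c⁻¹ (inv_ne_zero hc)).map_punctured_nhds_eq 0).le
  refine ((h.comp hmap).const_smul (c ^ holOrder f)⁻¹).congr fun t => ?_
  simp only [Function.comp_apply, mul_inv_cancel_left₀ hc, smul_smul, mul_pow, mul_inv, inv_pow,
    inv_inv, inv_mul_cancel_left₀ (pow_ne_zero _ hc)]

end

theorem stmt19_general    {n : ℕ} (k l : ℕ) (hk : 0 < k) (hl : 0 < l)
    (Φ Ψ : ℂ → (Fin (n + 1) → ℂ))
    (ε η : ℂ) (hε : ε ^ l = 1) (hη : η ^ k = 1)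
    (vεη : Fin (n + 1) → ℂ)
    (hvεη : Tendsto (fun t : ℂ =>
        (t ^ holOrder (fun s : ℂ => Φ (η * s ^ l) - Ψ (ε * s ^ k)))⁻¹ •
          (Φ (η * t ^ l) - Ψ (ε * t ^ k))) (𝓝[≠] 0) (𝓝 vεη)) :
    ∃ ε' : ℂ, ε' ^ l = 1 ∧ ∃ v' : Fin (n + 1) → ℂ,
      Tendsto (fun t : ℂ =>
          (t ^ holOrder (fun s : ℂ => Φ (s ^ l) - Ψ (ε' * s ^ k)))⁻¹ •
            (Φ (t ^ l) - Ψ (ε' * t ^ k))) (𝓝[≠] 0) (𝓝 v') ∧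
      Submodule.span ℂ {vεη} = Submodule.span ℂ {v'} := by
  obtain ⟨δ, hδ⟩ := IsAlgClosed.exists_pow_nat_eq η hl
  have hδ0 : δ ≠ 0 := by
    rintro rfl
    simp [← hδ, zero_pow hl.ne', zero_pow hk.ne'] at hη
  have hδk : δ ^ k ≠ 0 := pow_ne_zero k hδ0
  refine ⟨ε / δ ^ k, by rw [div_pow, ← pow_mul, mul_comm, pow_mul, hδ, hη, hε, div_one], ?_⟩
  have hreparam : ∀ s, Φ (η * s ^ l) - Ψ (ε * s ^ k)
      = Φ ((δ * s) ^ l) - Ψ (ε / δ ^ k * (δ * s) ^ k) := fun s => by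
    rw [mul_pow, hδ, mul_pow, ← mul_assoc, div_mul_cancel₀ ε hδk]
  simp only [hreparam] at hvεη
  exact ⟨_, tendsto_inv_pow_holOrder_smul_of_comp_mul_left hδ0 hvεη,
    (Submodule.span_singleton_smul_eq (inv_ne_zero (pow_ne_zero _ hδ0)).isUnit vεη).symm⟩

theorem stmt19    {n : ℕ} (r : ℝ) (hr : 0 < r) (k l : ℕ) (hk : 0 < k) (hl : 0 < l)
    (Φ Ψ : ℂ → (Fin (n + 1) → ℂ))
    (hΦ : DifferentiableOn ℂ Φ (Metric.ball 0 r))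
    (hΨ : DifferentiableOn ℂ Ψ (Metric.ball 0 r))
    (hΦinj : Set.InjOn Φ (Metric.ball 0 r))
    (hΨinj : Set.InjOn Ψ (Metric.ball 0 r))
    (hΦ1 : ∀ t ∈ Metric.ball (0:ℂ) r, Φ t 0 = t ^ k)
    (hΨ1 : ∀ τ ∈ Metric.ball (0:ℂ) r, Ψ τ 0 = τ ^ l)
    (hΦord : ∀ i : Fin (n + 1), i ≠ 0 → ∀ m ≤ k, iteratedDeriv m (fun t => Φ t i) 0 = 0)
    (hΨord : ∀ i : Fin (n + 1), i ≠ 0 → ∀ m ≤ l, iteratedDeriv m (fun τ => Ψ τ i) 0 = 0)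
    (hlk : l ≤ k)
    (ε η : ℂ) (hε : ε ^ l = 1) (hη : η ^ k = 1)
    (vεη : Fin (n + 1) → ℂ)
    (hvεη : Tendsto (fun t : ℂ =>
        (t ^ holOrder (fun s : ℂ => Φ (η * s ^ l) - Ψ (ε * s ^ k)))⁻¹ •
          (Φ (η * t ^ l) - Ψ (ε * t ^ k))) (𝓝[≠] 0) (𝓝 vεη)) :
    ∃ ε' : ℂ, ε' ^ l = 1 ∧ ∃ v' : Fin (n + 1) → ℂ,
      Tendsto (fun t : ℂ =>
          (t ^ holOrder (fun s : ℂ => Φ (s ^ l) - Ψ (ε' * s ^ k)))⁻¹ •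
            (Φ (t ^ l) - Ψ (ε' * t ^ k))) (𝓝[≠] 0) (𝓝 v') ∧
      Submodule.span ℂ {vεη} = Submodule.span ℂ {v'} :=
  stmt19_general k l hk hl Φ Ψ ε η hε hη vεη hvεη
end
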